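/- arXiv:2310.01786 — 3 statements merged into one kernel-verified Lean document; each statement's English description precedes it below -/
import Mathlib

section
/- Let ∇ denote the differential operator ∑_{i=1}^n ∂/∂x_i on the polynomial ring C[x_1,...,x_n]. Then for any partition λ with at most n parts, ∇ s_λ(x_1,...,x_n) = ∑_{(r,c)} (n - r + c) · s_{λ∖(r,c)}(x_1,...,x_n), where the sum is over all outside corners (r,c) of λ (cells whose removal leaves a partition) and λ∖(r,c) denotes λ with that corner removed. -/
open MvPolynomial Finset
open scoped Classical

/-- The Schur polynomial in `n` variables indexed by a Young diagram `μ`: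
the sum over all semistandard fillings of the cells of `μ` with values in `Fin n`
(weakly increasing along rows, strictly increasing down columns) of the product
of the corresponding variables. -/
noncomputable def schur (μ : YoungDiagram) (n : ℕ) : MvPolynomial (Fin n) ℚ :=
  ∑ T : μ.cells → Fin n,
    if ((∀ a b : μ.cells, a.1.1 = b.1.1 → a.1.2 ≤ b.1.2 → T a ≤ T b) ∧
        (∀ a b : μ.cells, a.1.2 = b.1.2 → a.1.1 < b.1.1 → T a < T b))
    then ∏ c, MvPolynomial.X (T c) else 0

/-- Chern plethysm `\overline{s}_λ(x_1,…,x_n)`: the Schur polynomial `s_λ` evaluated at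
the `n` quantities `(x_1+⋯+x_n) - x_i`. -/
noncomputable def sbar (μ : YoungDiagram) (n : ℕ) : MvPolynomial (Fin n) ℚ :=
  MvPolynomial.aeval (fun i : Fin n => (∑ j : Fin n, X j) - X i) (schur μ n)

/-- The number of standard fillings of a finite set `s` of cells: bijective fillings by
`0, 1, …, |s|-1` that strictly increase along rows and down columns. -/
noncomputable def sytCountCells (s : Finset (ℕ × ℕ)) : ℕ :=
  Nat.card {T : s → ℕ //
    Function.Injective T ∧ (∀ x, T x < s.card) ∧
    (∀ a b : s, a.1.1 = b.1.1 → a.1.2 < b.1.2 → T a < T b) ∧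
    (∀ a b : s, a.1.2 = b.1.2 → a.1.1 < b.1.1 → T a < T b)}

/-- `f^{λ/μ}`: the number of standard Young tableaux of skew shape `λ/μ`,
with the convention that it is `0` if `μ ⊄ λ`. -/
noncomputable def sytSkew (lam nu : YoungDiagram) : ℕ :=
  if nu ≤ lam then sytCountCells (lam.cells \ nu.cells) else 0

/-- The number of semistandard fillings of a finite set `s` of cells with entries in
`{lo, …, hi}` (weakly increasing along rows, strictly increasing down columns). -/
noncomputable def ssytCountCells (s : Finset (ℕ × ℕ)) (lo hi : ℕ) : ℕ :=
  Nat.card {T : s → ℕ //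
    (∀ x, lo ≤ T x ∧ T x ≤ hi) ∧
    (∀ a b : s, a.1.1 = b.1.1 → a.1.2 ≤ b.1.2 → T a ≤ T b) ∧
    (∀ a b : s, a.1.2 = b.1.2 → a.1.1 < b.1.1 → T a < T b)}

/-- The single-row Young diagram `(k)`. -/
noncomputable def rowD (k : ℕ) : YoungDiagram :=
  YoungDiagram.ofRowLens [k] (List.sortedGE_iff_pairwise.mpr (List.pairwise_singleton _ k))

/-- The single-column Young diagram `(1^k)`. -/
noncomputable def colD (k : ℕ) : YoungDiagram := (rowD k).transpose

/-! Induct on the number of variables. The branching rule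
`s_λ(x₁, …, x_{m+1}) = ∑_μ s_μ(x₁, …, x_m) x_{m+1}^{|λ/μ|}`, over the `μ` with `λ/μ` a horizontal
strip, turns both sides into combinations of the `s_ρ(x₁, …, x_m) x_{m+1}^{|λ| - |ρ| - 1}`, and it
suffices to compare coefficients. If `λ/ρ` is a horizontal strip, each of its rows contributes one
addable cell of `ρ` on the left and one removable corner of `λ` on the right; with `n = m + 1` on
the right their weights differ by the length of the row, and these lengths add up to the
`|λ/ρ|` produced by differentiating `x_{m+1}^{|λ/ρ|}`. Otherwise `λ/ρ` contains a vertical domino: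
with two of them both coefficients vanish, and with exactly one, `v` above `w`, the only terms are
`ρ + v` on the left and `λ - w` on the right, of equal weight. -/

section LowerSet

variable {α : Type*} [PartialOrder α] {s : Set α} {a : α}

theorem IsLowerSet.insert_of_forall_lt (hs : IsLowerSet s) (h : ∀ b < a, b ∈ s) :
    IsLowerSet (insert a s) := by
  rintro b c hcb (rfl | hb)
  · rcases hcb.lt_or_eq with hlt | rfl
    · exact Or.inr (h c hlt)
    · exact Or.inl rfl
  · exact Or.inr (hs hcb hb)

theorem IsLowerSet.diff_singleton_of_forall_not_lt (hs : IsLowerSet s) (h : ∀ b ∈ s, ¬a < b) :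
    IsLowerSet (s \ {a}) := by
  rintro b c hcb ⟨hb, hba⟩
  refine ⟨hs hcb hb, ?_⟩
  rintro rfl
  exact h b hb (lt_of_le_of_ne hcb (Ne.symm hba))

end LowerSet

namespace YoungDiagram

theorem finite_Iic (lam : YoungDiagram) : (Set.Iic lam).Finite := by
  refine Set.Finite.of_finite_image (f := cells) ?_ fun μ _ ν _ h => YoungDiagram.ext h
  refine lam.cells.powerset.finite_toSet.subset ?_
  rintro _ ⟨μ, hμ, rfl⟩
  exact Finset.mem_powerset.mpr (cells_subset_iff.mpr hμ)

noncomputable instance : LocallyFiniteOrderBot YoungDiagram :=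
  LocallyFiniteOrderBot.ofIic YoungDiagram (fun lam => (finite_Iic lam).toFinset)
    fun _ _ => Set.Finite.mem_toFinset _

theorem filter_Iic_le {lam μ : YoungDiagram} (h : μ ≤ lam) :
    {ρ ∈ Iic lam | ρ ≤ μ} = Iic μ := by
  ext ρ
  simp only [mem_filter, mem_Iic, and_iff_right_iff_imp]
  exact fun hρ => hρ.trans h

variable {lam μ ν ρ : YoungDiagram} {c : ℕ × ℕ}

theorem lt_colLen_zero (hc : c ∈ lam) : c.1 < lam.colLen 0 :=
  mem_iff_lt_colLen.mp (lam.up_left_mem le_rfl (Nat.zero_le _) hc)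

theorem rowLen_mono (h : ρ ≤ μ) (i : ℕ) : ρ.rowLen i ≤ μ.rowLen i := by
  by_contra! hlt
  exact (mem_iff_lt_rowLen.mp (h (mem_iff_lt_rowLen.mpr hlt))).false

theorem exists_cells_eq_insert (h : ρ ≤ μ) (hcard : ρ.card + 1 = μ.card) :
    ∃ b ∉ ρ, μ.cells = insert b ρ.cells := by
  have hsub : ρ.cells ⊆ μ.cells := cells_subset_iff.mpr h
  obtain ⟨b, hb⟩ : ∃ b, μ.cells \ ρ.cells = {b} := by
    rw [← Finset.card_eq_one, Finset.card_sdiff_of_subset hsub]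
    simp only [YoungDiagram.card] at hcard
    omega
  refine ⟨b, fun hbρ => ?_, ?_⟩
  · simpa [hbρ] using (Finset.ext_iff.mp hb b)
  · rw [Finset.insert_eq, ← hb, Finset.sdiff_union_of_subset hsub]

theorem mem_iff_of_cells_eq_insert {b : ℕ × ℕ} (h : μ.cells = insert b ρ.cells) :
    c ∈ μ ↔ c = b ∨ c ∈ ρ := by
  rw [← mem_cells, h, Finset.mem_insert, mem_cells]

theorem rowLen_of_cells_eq_insert {i j : ℕ} (hb : (i, j) ∉ ρ)
    (h : μ.cells = insert (i, j) ρ.cells) : ρ.rowLen i = j ∧ μ.rowLen i = j + 1 := by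
  have hmem (c : ℕ × ℕ) := mem_iff_of_cells_eq_insert (c := c) h
  have hbμ : (i, j) ∈ μ := (hmem _).mpr (Or.inl rfl)
  have hnext : (i, j + 1) ∉ μ := fun hc => by
    rcases (hmem _).mp hc with hc | hc
    · simp at hc
    · exact hb (ρ.up_left_mem le_rfl j.le_succ hc)
  have hprev (hj : 0 < j) : (i, j - 1) ∈ ρ := by
    rcases (hmem _).mp (μ.up_left_mem le_rfl (j.sub_le 1) hbμ) with hc | hc
    · simp at hc; omega
    · exact hc
  simp only [mem_iff_lt_rowLen] at hbμ hnext hb hprev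
  omega

theorem card_eq_sum_rowLen {N : ℕ} (h : ∀ c ∈ μ, c.1 < N) :
    μ.card = ∑ i ∈ range N, μ.rowLen i := by
  rw [YoungDiagram.card, Finset.card_eq_sum_card_fiberwise (f := Prod.fst)
    fun c hc => Finset.mem_range.mpr (h c ((mem_cells _).mp hc))]
  simp only [rowLen_eq_card, row]

theorem cells_eq_singleton_of_card_eq_one {lam : YoungDiagram} (h : lam.card = 1) :
    lam.cells = {(0, 0)} := by
  obtain ⟨a, ha⟩ := Finset.card_eq_one.mp h
  have h00 : ((0, 0) : ℕ × ℕ) ∈ lam.cells :=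
    (mem_cells _).mpr (lam.up_left_mem (Nat.zero_le _) (Nat.zero_le _)
      ((mem_cells _).mp (ha ▸ Finset.mem_singleton_self a)))
  rw [ha, Finset.mem_singleton] at h00
  rw [ha, h00]

def addCell (ρ : YoungDiagram) (c : ℕ × ℕ) (h : ∀ b < c, b ∈ ρ) : YoungDiagram where
  cells := insert c ρ.cells
  isLowerSet := by
    rw [Finset.coe_insert]
    exact ρ.isLowerSet.insert_of_forall_lt h

def eraseCell (lam : YoungDiagram) (c : ℕ × ℕ) (h : ∀ b ∈ lam, ¬c < b) : YoungDiagram where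
  cells := lam.cells.erase c
  isLowerSet := by
    rw [Finset.coe_erase]
    exact lam.isLowerSet.diff_singleton_of_forall_not_lt h

theorem forall_lt_mem_of_up_left (hup : 0 < c.1 → (c.1 - 1, c.2) ∈ ρ)
    (hleft : 0 < c.2 → (c.1, c.2 - 1) ∈ ρ) : ∀ b < c, b ∈ ρ := by
  rintro ⟨b₁, b₂⟩ hb
  rcases Prod.lt_iff.mp hb with ⟨h₁, h₂⟩ | ⟨h₁, h₂⟩
  · exact ρ.up_left_mem (Nat.le_sub_one_of_lt h₁) h₂ (hup (by simp at h₁; omega))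
  · exact ρ.up_left_mem h₁ (Nat.le_sub_one_of_lt h₂) (hleft (by simp at h₂; omega))

theorem forall_not_lt_of_notMem (hright : (c.1, c.2 + 1) ∉ lam)
    (hbelow : (c.1 + 1, c.2) ∉ lam) : ∀ b ∈ lam, ¬c < b := by
  rintro ⟨b₁, b₂⟩ hb hcb
  rcases Prod.lt_iff.mp hcb with ⟨h₁, h₂⟩ | ⟨h₁, h₂⟩
  · exact hbelow (lam.up_left_mem h₁ h₂ hb)
  · exact hright (lam.up_left_mem h₁ h₂ hb)

theorem le_addCell (h : ∀ b < c, b ∈ ρ) : ρ ≤ ρ.addCell c h :=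
  cells_subset_iff.mp (Finset.subset_insert _ _)

theorem addCell_le (h : ∀ b < c, b ∈ ρ) (hc : c ∈ lam) (hρ : ρ ≤ lam) : ρ.addCell c h ≤ lam :=
  cells_subset_iff.mp (Finset.insert_subset ((mem_cells _).mpr hc) (cells_subset_iff.mpr hρ))

theorem card_addCell (h : ∀ b < c, b ∈ ρ) (hc : c ∉ ρ) : (ρ.addCell c h).card = ρ.card + 1 :=
  Finset.card_insert_of_notMem hc

theorem cells_addCell_sdiff (h : ∀ b < c, b ∈ ρ) (hc : c ∉ ρ) :
    (ρ.addCell c h).cells \ ρ.cells = {c} :=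
  Finset.insert_sdiff_cancel hc

theorem eraseCell_le (h : ∀ b ∈ lam, ¬c < b) : lam.eraseCell c h ≤ lam :=
  cells_subset_iff.mp (Finset.erase_subset _ _)

theorem le_eraseCell (h : ∀ b ∈ lam, ¬c < b) (hρ : ρ ≤ lam) (hc : c ∉ ρ) :
    ρ ≤ lam.eraseCell c h :=
  fun _ hb => (mem_cells _).mp (Finset.mem_erase.mpr ⟨fun hbc => hc (hbc ▸ hb), hρ hb⟩)

theorem card_eraseCell (h : ∀ b ∈ lam, ¬c < b) (hc : c ∈ lam) :
    (lam.eraseCell c h).card + 1 = lam.card :=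
  Finset.card_erase_add_one hc

theorem cells_sdiff_eraseCell (h : ∀ b ∈ lam, ¬c < b) (hc : c ∈ lam) :
    lam.cells \ (lam.eraseCell c h).cells = {c} :=
  Finset.sdiff_erase_self hc

def IsHorizontalStrip (lam μ : YoungDiagram) : Prop :=
  ∀ c ∈ lam, c ∉ μ → (c.1 + 1, c.2) ∉ lam

theorem IsHorizontalStrip.mono_right (h : IsHorizontalStrip lam ρ) (hρμ : ρ ≤ μ) :
    IsHorizontalStrip lam μ :=
  fun c hc hcμ => h c hc fun hcρ => hcμ (hρμ hcρ)

theorem IsHorizontalStrip.mono_left (h : IsHorizontalStrip lam ρ) (hν : ν ≤ lam) :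
    IsHorizontalStrip ν ρ :=
  fun c hc hcρ hb => h c (hν hc) hcρ (hν hb)

theorem IsHorizontalStrip.rowLen_succ_le (h : IsHorizontalStrip lam ρ) (i : ℕ) :
    lam.rowLen (i + 1) ≤ ρ.rowLen i := by
  by_contra! hlt
  refine h (i, ρ.rowLen i) ?_ (by simp [mem_iff_lt_rowLen]) (mem_iff_lt_rowLen.mpr hlt)
  exact mem_iff_lt_rowLen.mpr (hlt.trans_le (lam.rowLen_anti i (i + 1) i.le_succ))

theorem IsHorizontalStrip.forall_lt_mem (hs : IsHorizontalStrip lam ρ) {i : ℕ}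
    (hi : ρ.rowLen i < lam.rowLen i) : ∀ b < (i, ρ.rowLen i), b ∈ ρ := by
  refine forall_lt_mem_of_up_left (fun h => mem_iff_lt_rowLen.mpr ?_)
    fun h => mem_iff_lt_rowLen.mpr (by simp only at h ⊢; omega)
  have := hs.rowLen_succ_le (i - 1)
  simp only at h ⊢
  rw [Nat.sub_add_cancel h] at this
  omega

theorem IsHorizontalStrip.forall_not_lt (hs : IsHorizontalStrip lam ρ) {i : ℕ}
    (hi : ρ.rowLen i < lam.rowLen i) : ∀ b ∈ lam, ¬(i, lam.rowLen i - 1) < b := by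
  have := hs.rowLen_succ_le i
  exact forall_not_lt_of_notMem (by rw [mem_iff_lt_rowLen]; dsimp only; omega)
    (by rw [mem_iff_lt_rowLen]; dsimp only; omega)

end YoungDiagram

open YoungDiagram

def IsSemistandard {μ : YoungDiagram} {n : ℕ} (T : μ.cells → Fin n) : Prop :=
  (∀ a b : μ.cells, a.1.1 = b.1.1 → a.1.2 ≤ b.1.2 → T a ≤ T b) ∧
  (∀ a b : μ.cells, a.1.2 = b.1.2 → a.1.1 < b.1.1 → T a < T b)

theorem schur_eq_sum_filter_isSemistandard (μ : YoungDiagram) (n : ℕ) :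
    schur μ n = ∑ T : μ.cells → Fin n with IsSemistandard T, ∏ c, X (T c) := by
  rw [Finset.sum_filter, schur]
  exact Finset.sum_congr rfl fun T _ => if_congr Iff.rfl rfl rfl

noncomputable def schurMulLastPow (m k : ℕ) (μ : YoungDiagram) : MvPolynomial (Fin (m + 1)) ℚ :=
  rename Fin.castSucc (schur μ m) * X (Fin.last m) ^ k

section Branching

variable {lam μ : YoungDiagram} {m : ℕ}

theorem IsSemistandard.monotone {n : ℕ} {T : lam.cells → Fin n} (hT : IsSemistandard T) :
    Monotone T := by
  rintro ⟨⟨a₁, a₂⟩, ha⟩ ⟨⟨b₁, b₂⟩, hb⟩ ⟨h₁, h₂⟩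
  have hc : (a₁, b₂) ∈ lam.cells :=
    (mem_cells _).mpr (lam.up_left_mem h₁ le_rfl ((mem_cells _).mp hb))
  calc T ⟨_, ha⟩ ≤ T ⟨_, hc⟩ := hT.1 ⟨_, ha⟩ ⟨_, hc⟩ rfl h₂
    _ ≤ T ⟨_, hb⟩ := by
      rcases h₁.lt_or_eq with hlt | heq
      · exact (hT.2 ⟨_, hc⟩ ⟨_, hb⟩ rfl hlt).le
      · simp only at heq; subst heq; exact le_rfl

def cellsNeLast (T : lam.cells → Fin (m + 1)) : Finset (ℕ × ℕ) :=
  (univ.filter fun c => T c ≠ Fin.last m).map (Function.Embedding.subtype _)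

theorem mem_cellsNeLast {T : lam.cells → Fin (m + 1)} {c : ℕ × ℕ} :
    c ∈ cellsNeLast T ↔ ∃ h : c ∈ lam.cells, T ⟨c, h⟩ ≠ Fin.last m := by
  simp [cellsNeLast]

theorem isLowerSet_cellsNeLast {T : lam.cells → Fin (m + 1)} (hT : IsSemistandard T) :
    IsLowerSet (cellsNeLast T : Set (ℕ × ℕ)) := by
  intro a b hba ha
  rw [Finset.mem_coe] at ha ⊢
  obtain ⟨ha, hne⟩ := mem_cellsNeLast.mp ha
  have hb : b ∈ lam.cells := (mem_cells _).mpr (lam.isLowerSet hba ((mem_cells _).mp ha))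
  refine mem_cellsNeLast.mpr ⟨hb, Fin.lt_last_iff_ne_last.mp ?_⟩
  exact (hT.monotone (show (⟨b, hb⟩ : lam.cells) ≤ ⟨a, ha⟩ from hba)).trans_lt
    (Fin.lt_last_iff_ne_last.mpr hne)

theorem eq_last_of_notMem_cellsNeLast {T : lam.cells → Fin (m + 1)} {c : lam.cells}
    (hc : c.1 ∉ cellsNeLast T) : T c = Fin.last m := by
  by_contra hne
  exact hc (mem_cellsNeLast.mpr ⟨c.2, hne⟩)

theorem isHorizontalStrip_of_cellsNeLast {T : lam.cells → Fin (m + 1)} (hT : IsSemistandard T)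
    (hμ : cellsNeLast T = μ.cells) : IsHorizontalStrip lam μ := by
  intro c hc hcμ hbelow
  have hlast := eq_last_of_notMem_cellsNeLast (T := T) (c := ⟨c, (mem_cells _).mpr hc⟩)
    (by rwa [hμ, mem_cells])
  have := hT.2 ⟨c, (mem_cells _).mpr hc⟩ ⟨_, (mem_cells _).mpr hbelow⟩ rfl (Nat.lt_succ_self _)
  exact (Fin.le_last _).not_gt (hlast ▸ this)

def extendByLast (μ : YoungDiagram) (T : μ.cells → Fin m) (c : lam.cells) : Fin (m + 1) :=
  if h : c.1 ∈ μ.cells then (T ⟨c.1, h⟩).castSucc else Fin.last m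

theorem IsSemistandard.extendByLast (hs : IsHorizontalStrip lam μ) {T : μ.cells → Fin m}
    (hT : IsSemistandard T) : IsSemistandard (extendByLast (lam := lam) μ T) := by
  constructor
  · rintro ⟨a, _⟩ ⟨b, _⟩ hrow hcol
    unfold _root_.extendByLast
    split_ifs with ha hb hb
    · exact Fin.castSucc_le_castSucc_iff.mpr (hT.1 ⟨a, ha⟩ ⟨b, hb⟩ hrow hcol)
    · exact Fin.le_last _
    · exact absurd (μ.up_left_mem hrow.le hcol hb) ha
    · exact le_rfl
  · rintro ⟨a, hal⟩ ⟨b, hbl⟩ hcol hrow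
    unfold _root_.extendByLast
    split_ifs with ha hb hb
    · exact Fin.castSucc_lt_castSucc_iff.mpr (hT.2 ⟨a, ha⟩ ⟨b, hb⟩ hcol hrow)
    · exact Fin.castSucc_lt_last _
    · exact absurd (μ.up_left_mem hrow.le hcol.le hb) ha
    · exact absurd (lam.up_left_mem hrow hcol.le ((mem_cells _).mp hbl))
        (hs a ((mem_cells _).mp hal) ha)

theorem cellsNeLast_extendByLast (hμ : μ ≤ lam) (T : μ.cells → Fin m) :
    cellsNeLast (extendByLast (lam := lam) μ T) = μ.cells := by
  ext c
  simp only [mem_cellsNeLast, extendByLast]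
  constructor
  · rintro ⟨_, hne⟩
    by_contra hc
    exact hne (dif_neg hc)
  · intro hc
    exact ⟨cells_subset_iff.mpr hμ hc, by simp [hc, Fin.castSucc_ne_last]⟩

theorem card_filter_notMem_cells (hμ : μ ≤ lam) :
    (univ.filter fun c : lam.cells => c.1 ∉ μ.cells).card = lam.card - μ.card := by
  rw [YoungDiagram.card, YoungDiagram.card, ← Finset.card_sdiff_of_subset (cells_subset_iff.mpr hμ)]
  refine Finset.card_bij (fun c _ => c.1) (fun c hc => ?_) (fun _ _ _ _ h => Subtype.ext h) ?_
  · exact Finset.mem_sdiff.mpr ⟨c.2, (Finset.mem_filter.mp hc).2⟩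
  · intro c hc
    obtain ⟨hcl, hcμ⟩ := Finset.mem_sdiff.mp hc
    exact ⟨⟨c, hcl⟩, Finset.mem_filter.mpr ⟨Finset.mem_univ _, hcμ⟩, rfl⟩

theorem prod_X_extendByLast (hμ : μ ≤ lam) (T : μ.cells → Fin m) :
    ∏ c, (X (extendByLast (lam := lam) μ T c) : MvPolynomial (Fin (m + 1)) ℚ) =
      rename Fin.castSucc (∏ c, X (T c)) * X (Fin.last m) ^ (lam.card - μ.card) := by
  rw [← Finset.prod_filter_mul_prod_filter_not univ (fun c : lam.cells => c.1 ∈ μ.cells)]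
  congr 1
  · rw [map_prod]
    refine Finset.prod_bij' (fun c hc => ⟨c.1, (Finset.mem_filter.mp hc).2⟩)
      (fun c _ => ⟨c.1, cells_subset_iff.mpr hμ c.2⟩) (by simp) (by simp) (by simp) (by simp) ?_
    intro c hc
    simp [extendByLast, (Finset.mem_filter.mp hc).2]
  · rw [← card_filter_notMem_cells hμ, ← Finset.prod_const]
    exact Finset.prod_congr rfl fun c hc => by
      rw [extendByLast, dif_neg (Finset.mem_filter.mp hc).2]

theorem cellsNeLast_subset (T : lam.cells → Fin (m + 1)) : cellsNeLast T ⊆ lam.cells :=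
  fun _ hc => (mem_cellsNeLast.mp hc).1

theorem exists_extendByLast_eq {T : lam.cells → Fin (m + 1)} (hT : IsSemistandard T)
    (hμT : cellsNeLast T = μ.cells) :
    ∃ T' : μ.cells → Fin m, IsSemistandard T' ∧ extendByLast μ T' = T := by
  have hμ : μ.cells ⊆ lam.cells := hμT ▸ cellsNeLast_subset T
  have hne (c : μ.cells) : T ⟨c.1, hμ c.2⟩ ≠ Fin.last m :=
    (mem_cellsNeLast.mp (hμT.symm ▸ c.2 : c.1 ∈ cellsNeLast T)).2
  refine ⟨fun c => (T ⟨c.1, hμ c.2⟩).castPred (hne c), ⟨?_, ?_⟩, ?_⟩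
  · intro a b hrow hcol
    exact Fin.castPred_le_castPred_iff.mpr (hT.1 _ _ hrow hcol)
  · intro a b hcol hrow
    exact Fin.castPred_lt_castPred_iff.mpr (hT.2 _ _ hcol hrow)
  · funext c
    unfold extendByLast
    split_ifs with hc
    · exact Fin.castSucc_castPred _ _
    · exact (eq_last_of_notMem_cellsNeLast (hμT ▸ hc)).symm

theorem sum_prod_X_filter_cellsNeLast_eq (hμ : μ ≤ lam) :
    ∑ T : lam.cells → Fin (m + 1) with IsSemistandard T ∧ cellsNeLast T = μ.cells,
        ∏ c, (X (T c) : MvPolynomial (Fin (m + 1)) ℚ) =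
      if IsHorizontalStrip lam μ then schurMulLastPow m (lam.card - μ.card) μ else 0 := by
  split_ifs with hs
  · rw [schurMulLastPow, schur_eq_sum_filter_isSemistandard, map_sum, Finset.sum_mul]
    symm
    refine Finset.sum_bij (fun T _ => extendByLast μ T) (fun T hT => ?_) (fun T₁ _ T₂ _ h => ?_)
      (fun T hT => ?_) fun T _ => (prod_X_extendByLast hμ T).symm
    · exact Finset.mem_filter.mpr ⟨Finset.mem_univ _,
        (Finset.mem_filter.mp hT).2.extendByLast hs, cellsNeLast_extendByLast hμ T⟩
    · funext c
      simpa [extendByLast, c.2] using congrFun h ⟨c.1, cells_subset_iff.mpr hμ c.2⟩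
    · obtain ⟨T', hT', rfl⟩ := exists_extendByLast_eq (Finset.mem_filter.mp hT).2.1
        (Finset.mem_filter.mp hT).2.2
      exact ⟨T', Finset.mem_filter.mpr ⟨Finset.mem_univ _, hT'⟩, rfl⟩
  · refine Finset.sum_eq_zero fun T hT => ?_
    obtain ⟨hT, hμT⟩ := (Finset.mem_filter.mp hT).2
    exact absurd (isHorizontalStrip_of_cellsNeLast hT hμT) hs

/-- The branching rule: the entries equal to the largest value `m` of a semistandard
filling form a horizontal strip. -/
theorem schur_succ (lam : YoungDiagram) (m : ℕ) :
    schur lam (m + 1) = ∑ μ ∈ Iic lam,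
      if IsHorizontalStrip lam μ then schurMulLastPow m (lam.card - μ.card) μ else 0 := by
  rw [schur_eq_sum_filter_isSemistandard,
    ← Finset.sum_fiberwise_of_maps_to (g := cellsNeLast) (t := (Iic lam).image cells) ?_,
    Finset.sum_image fun μ _ ν _ h => YoungDiagram.ext h]
  · refine Finset.sum_congr rfl fun μ hμ => ?_
    rw [Finset.filter_filter, sum_prod_X_filter_cellsNeLast_eq (mem_Iic.mp hμ)]
  · intro T hT
    refine Finset.mem_image.mpr ⟨⟨_, isLowerSet_cellsNeLast (Finset.mem_filter.mp hT).2⟩, ?_, rfl⟩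
    exact mem_Iic.mpr (cells_subset_iff.mp (cellsNeLast_subset T))

end Branching

noncomputable def nabla (n : ℕ) : Derivation ℚ (MvPolynomial (Fin n) ℚ) (MvPolynomial (Fin n) ℚ) :=
  ∑ i, pderiv i

theorem nabla_apply (n : ℕ) (p : MvPolynomial (Fin n) ℚ) : nabla n p = ∑ i, pderiv i p := by
  rw [nabla, ← Derivation.coeFnAddMonoidHom_apply, map_sum, Finset.sum_apply]
  rfl

theorem nabla_X {n : ℕ} (j : Fin n) : nabla n (X j) = 1 := by
  simp [nabla_apply, pderiv_X, Pi.single_apply]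

theorem nabla_rename_castSucc {m : ℕ} (p : MvPolynomial (Fin m) ℚ) :
    nabla (m + 1) (rename Fin.castSucc p) = rename Fin.castSucc (nabla m p) := by
  have hlast : pderiv (Fin.last m) (rename Fin.castSucc p) = 0 := by
    refine pderiv_eq_zero_of_notMem_vars fun h => ?_
    obtain ⟨i, -, hi⟩ := mem_vars_rename _ _ h
    exact Fin.castSucc_ne_last i hi
  rw [nabla_apply, nabla_apply, Fin.sum_univ_castSucc, hlast, add_zero, map_sum]
  exact Finset.sum_congr rfl fun i _ => pderiv_rename (Fin.castSucc_injective m) i p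

theorem nabla_rename_castSucc_mul_X_last_pow {m : ℕ} (k : ℕ) (p : MvPolynomial (Fin m) ℚ) :
    nabla (m + 1) (rename Fin.castSucc p * X (Fin.last m) ^ k) =
      rename Fin.castSucc (nabla m p) * X (Fin.last m) ^ k +
        (k : ℚ) • (rename Fin.castSucc p * X (Fin.last m) ^ (k - 1)) := by
  rw [Derivation.leibniz, Derivation.leibniz_pow, nabla_X, nabla_rename_castSucc]
  simp only [smul_eq_mul, nsmul_eq_mul, mul_one, MvPolynomial.smul_eq_C_mul, map_natCast]
  ring

def shiftedContent (n : ℕ) (c : ℕ × ℕ) : ℚ := n - c.1 + c.2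

/- After expanding by the branching rule, `addableWeight m lam ρ` is the coefficient of
`s_ρ(x₁, …, x_m) x_{m+1}^{|lam| - |ρ| - 1}` in `∇` applied to the factors `s_μ(x₁, …, x_m)`, and
`removableWeight (m + 1) lam ρ` its coefficient in the right-hand side. -/
noncomputable def addableWeight (m : ℕ) (lam ρ : YoungDiagram) : ℚ :=
  ∑ μ ∈ Iic lam, if IsHorizontalStrip lam μ ∧ ρ ≤ μ ∧ ρ.card + 1 = μ.card then
    ∑ c ∈ μ.cells \ ρ.cells, shiftedContent m c else 0

noncomputable def removableWeight (n : ℕ) (lam ρ : YoungDiagram) : ℚ :=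
  ∑ ν ∈ Iic lam, if ν.card + 1 = lam.card ∧ ρ ≤ ν ∧ IsHorizontalStrip ν ρ then
    ∑ c ∈ lam.cells \ ν.cells, shiftedContent n c else 0

section HorizontalStrip

variable {lam ρ : YoungDiagram}

noncomputable def stripRows (lam ρ : YoungDiagram) : Finset ℕ :=
  (range (lam.colLen 0)).filter fun i => ρ.rowLen i < lam.rowLen i

theorem addableWeight_of_isHorizontalStrip (hρ : ρ ≤ lam) (hs : IsHorizontalStrip lam ρ)
    (m : ℕ) : addableWeight m lam ρ = ∑ i ∈ stripRows lam ρ, shiftedContent m (i, ρ.rowLen i) := by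
  have hnot (i : ℕ) : (i, ρ.rowLen i) ∉ ρ := by simp [mem_iff_lt_rowLen]
  rw [addableWeight, ← Finset.sum_filter]
  symm
  refine Finset.sum_bij (fun i hi => ρ.addCell _ (hs.forall_lt_mem (Finset.mem_filter.mp hi).2))
    (fun i hi => ?_) (fun i _ j _ h => ?_) (fun μ hμ => ?_) (fun i _ => ?_)
  · refine Finset.mem_filter.mpr ⟨mem_Iic.mpr (addCell_le _ ?_ hρ),
      hs.mono_right (le_addCell _), le_addCell _, (card_addCell _ (hnot i)).symm⟩
    exact mem_iff_lt_rowLen.mpr (Finset.mem_filter.mp hi).2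
  · have hmem := (Finset.ext_iff.mp (congrArg cells h) (i, ρ.rowLen i)).mp
      (Finset.mem_insert_self _ _)
    rcases Finset.mem_insert.mp hmem with hij | hi
    · exact congrArg Prod.fst hij
    · exact absurd ((mem_cells _).mp hi) (hnot i)
  · obtain ⟨hμ, -, hρμ, hcard⟩ := Finset.mem_filter.mp hμ
    obtain ⟨⟨i, j⟩, hbρ, hμb⟩ := exists_cells_eq_insert hρμ hcard
    have hb : (i, j) ∈ lam := mem_Iic.mp hμ ((mem_iff_of_cells_eq_insert hμb).mpr (Or.inl rfl))
    have hρi := (rowLen_of_cells_eq_insert hbρ hμb).1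
    refine ⟨i, Finset.mem_filter.mpr ⟨Finset.mem_range.mpr (lt_colLen_zero hb), ?_⟩,
      YoungDiagram.ext ?_⟩
    · rw [hρi]; exact mem_iff_lt_rowLen.mp hb
    · change insert _ ρ.cells = μ.cells
      rw [hμb, hρi]
  · rw [cells_addCell_sdiff _ (hnot i), Finset.sum_singleton]

theorem removableWeight_of_isHorizontalStrip (hρ : ρ ≤ lam) (hs : IsHorizontalStrip lam ρ)
    (n : ℕ) :
    removableWeight n lam ρ = ∑ i ∈ stripRows lam ρ, shiftedContent n (i, lam.rowLen i - 1) := by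
  have hmem {i : ℕ} (hi : i ∈ stripRows lam ρ) : (i, lam.rowLen i - 1) ∈ lam :=
    mem_iff_lt_rowLen.mpr (by have := (Finset.mem_filter.mp hi).2; omega)
  have hnot {i : ℕ} (hi : i ∈ stripRows lam ρ) : (i, lam.rowLen i - 1) ∉ ρ :=
    mem_iff_lt_rowLen.not.mpr (by have := (Finset.mem_filter.mp hi).2; omega)
  rw [removableWeight, ← Finset.sum_filter]
  symm
  refine Finset.sum_bij (fun i hi => lam.eraseCell _ (hs.forall_not_lt (Finset.mem_filter.mp hi).2))
    (fun i hi => ?_) (fun i hi j _ h => ?_) (fun ν hν => ?_) (fun i hi => ?_)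
  · exact Finset.mem_filter.mpr ⟨mem_Iic.mpr (eraseCell_le _), card_eraseCell _ (hmem hi),
      le_eraseCell _ hρ (hnot hi), hs.mono_left (eraseCell_le _)⟩
  · have hij := (Finset.erase_inj _ (hmem hi)).mp (congrArg cells h)
    exact congrArg Prod.fst hij
  · obtain ⟨hν, hcard, hρν, -⟩ := Finset.mem_filter.mp hν
    obtain ⟨⟨i, j⟩, hbν, hlam⟩ := exists_cells_eq_insert (mem_Iic.mp hν) hcard
    have hlami := (rowLen_of_cells_eq_insert hbν hlam).2
    have hb : (i, j) ∈ lam := (mem_iff_of_cells_eq_insert hlam).mpr (Or.inl rfl)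
    have hρi : ρ.rowLen i ≤ j := not_lt.mp (mem_iff_lt_rowLen.not.mp fun h => hbν (hρν h))
    refine ⟨i, Finset.mem_filter.mpr ⟨Finset.mem_range.mpr (lt_colLen_zero hb), by omega⟩,
      YoungDiagram.ext ?_⟩
    change lam.cells.erase _ = ν.cells
    rw [hlami, Nat.add_sub_cancel, hlam, Finset.erase_insert hbν]
  · rw [cells_sdiff_eraseCell _ (hmem hi), Finset.sum_singleton]

theorem card_sub_card_eq_sum_stripRows (hρ : ρ ≤ lam) :
    ((lam.card - ρ.card : ℕ) : ℚ) = ∑ i ∈ stripRows lam ρ, ((lam.rowLen i : ℚ) - ρ.rowLen i) := by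
  have hrows : ∀ c ∈ lam, c.1 < lam.colLen 0 := fun c hc => lt_colLen_zero hc
  have hle : ∑ i ∈ range (lam.colLen 0), ρ.rowLen i ≤ ∑ i ∈ range (lam.colLen 0), lam.rowLen i :=
    Finset.sum_le_sum fun i _ => rowLen_mono hρ i
  rw [card_eq_sum_rowLen hrows, card_eq_sum_rowLen (μ := ρ) fun c hc => hrows c (hρ hc),
    Nat.cast_sub hle, Nat.cast_sum, Nat.cast_sum, ← Finset.sum_sub_distrib, stripRows]
  refine (Finset.sum_filter_of_ne fun i _ hne => lt_of_le_of_ne (rowLen_mono hρ i) ?_).symm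
  exact fun h => hne (by rw [h, sub_self])

theorem addableWeight_add_card_sub_card (hρ : ρ ≤ lam) (hs : IsHorizontalStrip lam ρ) (m : ℕ) :
    addableWeight m lam ρ + ((lam.card - ρ.card : ℕ) : ℚ) = removableWeight (m + 1) lam ρ := by
  rw [addableWeight_of_isHorizontalStrip hρ hs, removableWeight_of_isHorizontalStrip hρ hs,
    card_sub_card_eq_sum_stripRows hρ, ← Finset.sum_add_distrib]
  refine Finset.sum_congr rfl fun i hi => ?_
  have : 1 ≤ lam.rowLen i := by have := (Finset.mem_filter.mp hi).2; omega
  simp only [shiftedContent, Nat.cast_sub this]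
  push_cast
  ring

end HorizontalStrip

section NotHorizontalStrip

variable {lam ρ : YoungDiagram} {v : ℕ × ℕ}

theorem eq_of_isHorizontalStrip_of_cells_eq_insert {μ : YoungDiagram} {b : ℕ × ℕ}
    (hs : IsHorizontalStrip lam μ) (hμ : μ.cells = insert b ρ.cells) (hv : v ∈ lam)
    (hvρ : v ∉ ρ) (hvb : (v.1 + 1, v.2) ∈ lam) : v = b := by
  have hvμ : v ∈ μ := by
    by_contra h
    exact hs v hv h hvb
  exact ((mem_iff_of_cells_eq_insert hμ).mp hvμ).resolve_right hvρ

theorem below_eq_of_isHorizontalStrip_of_cells_eq_insert {ν : YoungDiagram} {b : ℕ × ℕ}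
    (hs : IsHorizontalStrip ν ρ) (hlam : lam.cells = insert b ν.cells)
    (hv : v ∈ lam) (hvρ : v ∉ ρ) (hvb : (v.1 + 1, v.2) ∈ lam) : (v.1 + 1, v.2) = b := by
  have hmem (c : ℕ × ℕ) := mem_iff_of_cells_eq_insert (c := c) hlam
  have hvν : v ∈ ν := by
    by_contra hvν
    have hvb' : v = b := ((hmem v).mp hv).resolve_right hvν
    have hbelow : (v.1 + 1, v.2) ∈ ν :=
      ((hmem _).mp hvb).resolve_left fun h => by simp [← hvb', Prod.ext_iff] at h
    exact hvν (ν.up_left_mem v.1.le_succ le_rfl hbelow)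
  exact ((hmem _).mp hvb).resolve_right (hs v hvν hvρ)

theorem addableWeight_eq_zero_of_ne {v' : ℕ × ℕ} (hv : v ∈ lam) (hvρ : v ∉ ρ)
    (hvb : (v.1 + 1, v.2) ∈ lam) (hv' : v' ∈ lam) (hv'ρ : v' ∉ ρ)
    (hv'b : (v'.1 + 1, v'.2) ∈ lam) (hne : v ≠ v') (m : ℕ) : addableWeight m lam ρ = 0 := by
  refine Finset.sum_eq_zero fun μ _ => if_neg fun ⟨hs, hρμ, hcard⟩ => hne ?_
  obtain ⟨b, -, hμb⟩ := exists_cells_eq_insert hρμ hcard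
  exact (eq_of_isHorizontalStrip_of_cells_eq_insert hs hμb hv hvρ hvb).trans
    (eq_of_isHorizontalStrip_of_cells_eq_insert hs hμb hv' hv'ρ hv'b).symm

theorem removableWeight_eq_zero_of_ne {v' : ℕ × ℕ} (hv : v ∈ lam) (hvρ : v ∉ ρ)
    (hvb : (v.1 + 1, v.2) ∈ lam) (hv' : v' ∈ lam) (hv'ρ : v' ∉ ρ)
    (hv'b : (v'.1 + 1, v'.2) ∈ lam) (hne : v ≠ v') (n : ℕ) : removableWeight n lam ρ = 0 := by
  refine Finset.sum_eq_zero fun ν hν => if_neg fun ⟨hcard, _, hs⟩ => hne ?_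
  obtain ⟨b, -, hlam⟩ := exists_cells_eq_insert (mem_Iic.mp hν) hcard
  have := (below_eq_of_isHorizontalStrip_of_cells_eq_insert hs hlam hv hvρ hvb).trans
    (below_eq_of_isHorizontalStrip_of_cells_eq_insert hs hlam hv' hv'ρ hv'b).symm
  simp only [Prod.ext_iff, add_left_inj] at this
  exact Prod.ext this.1 this.2

theorem forall_lt_mem_of_unique (hv : v ∈ lam) (hvb : (v.1 + 1, v.2) ∈ lam)
    (huniq : ∀ u ∈ lam, u ∉ ρ → (u.1 + 1, u.2) ∈ lam → u = v) : ∀ b < v, b ∈ ρ := by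
  refine forall_lt_mem_of_up_left (fun h => ?_) fun h => ?_
  · by_contra hup
    have hbelow : (v.1 - 1 + 1, v.2) ∈ lam := by rwa [Nat.sub_add_cancel h]
    have := huniq _ (lam.up_left_mem (Nat.sub_le _ _) le_rfl hv) hup hbelow
    simp only [Prod.ext_iff] at this
    omega
  · by_contra hleft
    have := huniq _ (lam.up_left_mem le_rfl (Nat.sub_le _ _) hv) hleft
      (lam.up_left_mem le_rfl (Nat.sub_le _ _) hvb)
    simp only [Prod.ext_iff] at this
    omega

theorem forall_not_lt_below_of_unique (hvρ : v ∉ ρ) (hvb : (v.1 + 1, v.2) ∈ lam)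
    (huniq : ∀ u ∈ lam, u ∉ ρ → (u.1 + 1, u.2) ∈ lam → u = v) :
    ∀ b ∈ lam, ¬(v.1 + 1, v.2) < b := by
  refine forall_not_lt_of_notMem (fun h => ?_) fun h => ?_
  · have := huniq (v.1, v.2 + 1) (lam.up_left_mem v.1.le_succ le_rfl h)
      (fun hu => hvρ (ρ.up_left_mem le_rfl v.2.le_succ hu)) h
    simp [Prod.ext_iff] at this
  · have := huniq (v.1 + 1, v.2) hvb (fun hu => hvρ (ρ.up_left_mem v.1.le_succ le_rfl hu)) h
    simp [Prod.ext_iff] at this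

theorem addableWeight_eq_of_unique (hρ : ρ ≤ lam) (hv : v ∈ lam) (hvρ : v ∉ ρ)
    (hvb : (v.1 + 1, v.2) ∈ lam) (huniq : ∀ u ∈ lam, u ∉ ρ → (u.1 + 1, u.2) ∈ lam → u = v)
    (m : ℕ) : addableWeight m lam ρ = shiftedContent m v := by
  set μ₀ := ρ.addCell v (forall_lt_mem_of_unique hv hvb huniq)
  have hμ₀ (c : ℕ × ℕ) : c ∈ μ₀ ↔ c = v ∨ c ∈ ρ := mem_iff_of_cells_eq_insert rfl
  have hvalid : IsHorizontalStrip lam μ₀ ∧ ρ ≤ μ₀ ∧ ρ.card + 1 = μ₀.card := by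
    refine ⟨fun c hc hcμ hcb => hcμ ?_, le_addCell _, (card_addCell _ hvρ).symm⟩
    exact (hμ₀ c).mpr (Or.inl (huniq c hc (fun h => hcμ ((hμ₀ c).mpr (Or.inr h))) hcb))
  rw [addableWeight, Finset.sum_eq_single_of_mem μ₀ (mem_Iic.mpr (addCell_le _ hv hρ)),
    if_pos hvalid, cells_addCell_sdiff _ hvρ, Finset.sum_singleton]
  refine fun μ _ hne => if_neg fun ⟨hs, hρμ, hcard⟩ => hne (YoungDiagram.ext ?_)
  obtain ⟨b, -, hμb⟩ := exists_cells_eq_insert hρμ hcard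
  rw [hμb, ← eq_of_isHorizontalStrip_of_cells_eq_insert hs hμb hv hvρ hvb]
  rfl

theorem removableWeight_eq_of_unique (hρ : ρ ≤ lam) (hv : v ∈ lam) (hvρ : v ∉ ρ)
    (hvb : (v.1 + 1, v.2) ∈ lam) (huniq : ∀ u ∈ lam, u ∉ ρ → (u.1 + 1, u.2) ∈ lam → u = v)
    (n : ℕ) : removableWeight n lam ρ = shiftedContent n (v.1 + 1, v.2) := by
  set ν₀ := lam.eraseCell (v.1 + 1, v.2) (forall_not_lt_below_of_unique hvρ hvb huniq)
  have hbρ : (v.1 + 1, v.2) ∉ ρ := fun h => hvρ (ρ.up_left_mem v.1.le_succ le_rfl h)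
  have hvalid : ν₀.card + 1 = lam.card ∧ ρ ≤ ν₀ ∧ IsHorizontalStrip ν₀ ρ := by
    refine ⟨card_eraseCell _ hvb, le_eraseCell _ hρ hbρ, fun c hc hcρ hcb => ?_⟩
    obtain rfl := huniq c (eraseCell_le _ hc) hcρ (eraseCell_le _ hcb)
    exact (Finset.mem_erase.mp ((mem_cells _).mpr hcb)).1 rfl
  rw [removableWeight, Finset.sum_eq_single_of_mem ν₀ (mem_Iic.mpr (eraseCell_le _)),
    if_pos hvalid, cells_sdiff_eraseCell _ hvb, Finset.sum_singleton]
  refine fun ν hν hne => if_neg fun ⟨hcard, _, hs⟩ => hne (YoungDiagram.ext ?_)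
  obtain ⟨b, hbν, hlam⟩ := exists_cells_eq_insert (mem_Iic.mp hν) hcard
  change ν.cells = lam.cells.erase _
  rw [below_eq_of_isHorizontalStrip_of_cells_eq_insert hs hlam hv hvρ hvb, hlam,
    Finset.erase_insert hbν]

theorem addableWeight_add_eq_removableWeight (hρ : ρ ≤ lam) (m : ℕ) :
    addableWeight m lam ρ + (if IsHorizontalStrip lam ρ then ((lam.card - ρ.card : ℕ) : ℚ) else 0) =
      removableWeight (m + 1) lam ρ := by
  by_cases hs : IsHorizontalStrip lam ρ
  · rw [if_pos hs, addableWeight_add_card_sub_card hρ hs]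
  rw [if_neg hs, add_zero]
  obtain ⟨v, hv, hvρ, hvb⟩ : ∃ v ∈ lam, v ∉ ρ ∧ (v.1 + 1, v.2) ∈ lam := by
    simpa [IsHorizontalStrip] using hs
  by_cases huniq : ∀ u ∈ lam, u ∉ ρ → (u.1 + 1, u.2) ∈ lam → u = v
  · rw [addableWeight_eq_of_unique hρ hv hvρ hvb huniq,
      removableWeight_eq_of_unique hρ hv hvρ hvb huniq, shiftedContent, shiftedContent]
    push_cast
    ring
  · push Not at huniq
    obtain ⟨v', hv', hv'ρ, hv'b, hne⟩ := huniq
    rw [addableWeight_eq_zero_of_ne hv hvρ hvb hv' hv'ρ hv'b hne.symm,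
      removableWeight_eq_zero_of_ne hv hvρ hvb hv' hv'ρ hv'b hne.symm]

end NotHorizontalStrip

section Assembly

variable {m : ℕ} {lam : YoungDiagram}

theorem sum_Iic_eq_sum_Iic_ite {M : Type*} [AddCommMonoid M] {μ : YoungDiagram} (hμ : μ ≤ lam)
    (f : YoungDiagram → M) : ∑ ρ ∈ Iic μ, f ρ = ∑ ρ ∈ Iic lam, if ρ ≤ μ then f ρ else 0 := by
  rw [← Finset.sum_filter, filter_Iic_le hμ]

theorem nabla_schurMulLastPow {μ : YoungDiagram} (hμ : μ ≤ lam)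
    (ih : nabla m (schur μ m) = ∑ ρ ∈ Iic μ, if ρ.card + 1 = μ.card then
      (∑ c ∈ μ.cells \ ρ.cells, shiftedContent m c) • schur ρ m else 0) :
    nabla (m + 1) (schurMulLastPow m (lam.card - μ.card) μ) =
      ∑ ρ ∈ Iic lam, (if ρ ≤ μ ∧ ρ.card + 1 = μ.card then
          ∑ c ∈ μ.cells \ ρ.cells, shiftedContent m c else 0) •
        schurMulLastPow m (lam.card - ρ.card - 1) ρ +
      ((lam.card - μ.card : ℕ) : ℚ) • schurMulLastPow m (lam.card - μ.card - 1) μ := by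
  rw [schurMulLastPow, nabla_rename_castSucc_mul_X_last_pow, ih, sum_Iic_eq_sum_Iic_ite hμ,
    map_sum, Finset.sum_mul]
  congr 1
  refine Finset.sum_congr rfl fun ρ _ => ?_
  rw [ite_and]
  split_ifs with hρ hcard
  · rw [map_smul, smul_mul_assoc, schurMulLastPow,
      show lam.card - μ.card = lam.card - ρ.card - 1 by omega]
  all_goals simp

theorem nabla_schur_succ
    (ih : ∀ μ : YoungDiagram, nabla m (schur μ m) = ∑ ρ ∈ Iic μ, if ρ.card + 1 = μ.card then
      (∑ c ∈ μ.cells \ ρ.cells, shiftedContent m c) • schur ρ m else 0) :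
    nabla (m + 1) (schur lam (m + 1)) = ∑ ρ ∈ Iic lam,
      (addableWeight m lam ρ +
          if IsHorizontalStrip lam ρ then ((lam.card - ρ.card : ℕ) : ℚ) else 0) •
        schurMulLastPow m (lam.card - ρ.card - 1) ρ := by
  have hterm : ∀ μ ∈ Iic lam, nabla (m + 1)
      (if IsHorizontalStrip lam μ then schurMulLastPow m (lam.card - μ.card) μ else 0) =
      ∑ ρ ∈ Iic lam, (if IsHorizontalStrip lam μ ∧ ρ ≤ μ ∧ ρ.card + 1 = μ.card then
          ∑ c ∈ μ.cells \ ρ.cells, shiftedContent m c else 0) •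
        schurMulLastPow m (lam.card - ρ.card - 1) ρ +
      (if IsHorizontalStrip lam μ then ((lam.card - μ.card : ℕ) : ℚ) else 0) •
        schurMulLastPow m (lam.card - μ.card - 1) μ := by
    intro μ hμ
    by_cases hs : IsHorizontalStrip lam μ
    · simp only [hs, if_true, true_and]
      exact nabla_schurMulLastPow (mem_Iic.mp hμ) (ih μ)
    · simp [hs]
  rw [schur_succ, map_sum, Finset.sum_congr rfl hterm, Finset.sum_add_distrib, Finset.sum_comm]
  simp only [← Finset.sum_smul, ← Finset.sum_add_distrib, ← add_smul]
  rfl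

theorem sum_smul_schur_succ :
    (∑ ν ∈ Iic lam, if ν.card + 1 = lam.card then
      (∑ c ∈ lam.cells \ ν.cells, shiftedContent (m + 1) c) • schur ν (m + 1) else 0) =
    ∑ ρ ∈ Iic lam, removableWeight (m + 1) lam ρ • schurMulLastPow m (lam.card - ρ.card - 1) ρ := by
  have hterm : ∀ ν ∈ Iic lam, (if ν.card + 1 = lam.card then
      (∑ c ∈ lam.cells \ ν.cells, shiftedContent (m + 1) c) • schur ν (m + 1) else 0) =
      ∑ ρ ∈ Iic lam, (if ν.card + 1 = lam.card ∧ ρ ≤ ν ∧ IsHorizontalStrip ν ρ then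
          ∑ c ∈ lam.cells \ ν.cells, shiftedContent (m + 1) c else 0) •
        schurMulLastPow m (lam.card - ρ.card - 1) ρ := by
    intro ν hν
    by_cases hcard : ν.card + 1 = lam.card
    · rw [if_pos hcard, schur_succ, sum_Iic_eq_sum_Iic_ite (mem_Iic.mp hν), Finset.smul_sum]
      refine Finset.sum_congr rfl fun ρ _ => ?_
      rw [ite_and, if_pos hcard, ite_and]
      split_ifs with hρ hs
      · rw [show ν.card - ρ.card = lam.card - ρ.card - 1 by omega]
      all_goals simp
    · simp [hcard]
  rw [Finset.sum_congr rfl hterm, Finset.sum_comm]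
  simp only [← Finset.sum_smul]
  rfl

end Assembly

theorem schur_zero_of_nonempty {ν : YoungDiagram} (hν : ν.cells.Nonempty) : schur ν 0 = 0 := by
  obtain ⟨c, hc⟩ := hν
  have : IsEmpty (ν.cells → Fin 0) := ⟨fun T => (T ⟨c, hc⟩).elim0⟩
  rw [schur, Finset.univ_eq_empty, Finset.sum_empty]

theorem sum_smul_schur_zero (lam : YoungDiagram) :
    (∑ ν ∈ Iic lam, if ν.card + 1 = lam.card then
      (∑ c ∈ lam.cells \ ν.cells, shiftedContent 0 c) • schur ν 0 else 0) = 0 := by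
  refine Finset.sum_eq_zero fun ν _ => ite_eq_right_iff.mpr fun hcard => ?_
  rcases ν.cells.eq_empty_or_nonempty with hν | hν
  · have hlam : lam.card = 1 := by rw [← hcard, YoungDiagram.card, hν, Finset.card_empty]
    simp [cells_eq_singleton_of_card_eq_one hlam, hν, shiftedContent]
  · rw [schur_zero_of_nonempty hν, smul_zero]

theorem nabla_schur_eq_sum (n : ℕ) (lam : YoungDiagram) :
    nabla n (schur lam n) = ∑ ν ∈ Iic lam, if ν.card + 1 = lam.card then
      (∑ c ∈ lam.cells \ ν.cells, shiftedContent n c) • schur ν n else 0 := by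
  induction n generalizing lam with
  | zero => rw [nabla_apply, Finset.univ_eq_empty, Finset.sum_empty, sum_smul_schur_zero]
  | succ m ih =>
    rw [nabla_schur_succ ih, sum_smul_schur_succ]
    exact Finset.sum_congr rfl fun ρ hρ => by
      rw [addableWeight_add_eq_removableWeight (mem_Iic.mp hρ)]

/-- The sum over outside corners `(r, c)` is the sum over the diagrams `nu ⊆ lam` with one cell
fewer; cells are `0`-indexed, which does not change `n - r + c`. -/
theorem nabla_schur_general (n : ℕ) (lam : YoungDiagram) :
    (∑ i : Fin n, MvPolynomial.pderiv i (schur lam n)) =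
      ∑ᶠ nu : YoungDiagram,
        if nu ≤ lam ∧ nu.card + 1 = lam.card then
          (∑ rc ∈ lam.cells \ nu.cells, ((n : ℚ) - rc.1 + rc.2)) • schur nu n
        else 0 := by
  rw [← nabla_apply, nabla_schur_eq_sum, finsum_eq_sum_of_support_subset (s := Iic lam)]
  · refine Finset.sum_congr rfl fun nu hnu => ?_
    simp only [mem_Iic.mp hnu, true_and]
    rfl
  · exact Function.support_subset_iff'.mpr fun nu hnu =>
      if_neg fun h => hnu (Finset.mem_coe.mpr (mem_Iic.mpr h.1))

/-- with `∇ = ∑_i ∂/∂x_i`, for a partition `λ` with at most `n` parts,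
`∇ s_λ = ∑ (n - r + c) · s_{λ∖(r,c)}`, the sum being over the outside corners `(r,c)` of `λ`.
Here the sum over corners is encoded as a sum over the Young diagrams `ν ⊆ λ` obtained from
`λ` by removing a single cell, the removed cell `(r,c)` contributing the coefficient
`n - r + c` (cells are 0-indexed, so this agrees with the 1-indexed quantity `n - r + c`). -/
theorem nabla_schur (n : ℕ) (lam : YoungDiagram) (hl : lam.colLen 0 ≤ n) :
    (∑ i : Fin n, MvPolynomial.pderiv i (schur lam n)) =
      ∑ᶠ nu : YoungDiagram,
        if nu ≤ lam ∧ nu.card + 1 = lam.card then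
          (∑ rc ∈ lam.cells \ nu.cells, ((n : ℚ) - rc.1 + rc.2)) • schur nu n
        else 0 :=
  nabla_schur_general n lam
end

section
/- A counting identity: for a partition μ of k, nonnegative integers i ≤ k ≤ n, the product C(n-i, k-i) · f^{μ/(1^i)} equals the number of tableaux T ∈ SYT(μ, n) such that the labels 1, 2, ..., i all appear in the first column of T. -/
/-!
In a tableau with positive entries increasing down columns, the entry in row `r` is at least
`r + 1`; so if the labels `1, …, i` all lie in the first column, they occupy its top `i` cells,
in order. Such a tableau is thus the column `(1^i)` labelled `1, …, i` glued to an injective,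
row- and column-strict filling of the skew shape `μ/(1^i)` by labels from `{i+1, …, n}`. That
filling is a choice of its `k - i` labels (`C(n-i, k-i)` ways) together with its standardization,
a standard tableau of shape `μ/(1^i)`.
-/

open MvPolynomial Finset
open scoped Classical

section StrictFillings

variable {s : Finset (ℕ × ℕ)}

def IsRowColStrict (T : s → ℕ) : Prop :=
  (∀ a b : s, a.1.1 = b.1.1 → a.1.2 < b.1.2 → T a < T b) ∧
  (∀ a b : s, a.1.2 = b.1.2 → a.1.1 < b.1.1 → T a < T b)

lemma IsRowColStrict.of_lt_imp_lt {T U : s → ℕ} (hT : IsRowColStrict T)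
    (h : ∀ a b, T a < T b → U a < U b) : IsRowColStrict U :=
  ⟨fun a b h₁ h₂ => h a b (hT.1 a b h₁ h₂), fun a b h₁ h₂ => h a b (hT.2 a b h₁ h₂)⟩

variable (s) in
abbrev StrictFillings (A : Finset ℕ) : Type :=
  {T : s → ℕ // Function.Injective T ∧ (∀ x, T x ∈ A) ∧ IsRowColStrict T}

namespace StrictFillings

variable {A B : Finset ℕ}

def relabel (e : A ≃o B) (T : StrictFillings s A) : StrictFillings s B :=
  ⟨fun x => e ⟨T.1 x, T.2.2.1 x⟩,
    fun _ _ hxy => T.2.1 (congrArg Subtype.val (e.injective (Subtype.val_injective hxy))),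
    fun _ => (e _).2,
    T.2.2.2.of_lt_imp_lt fun _ _ hab => e.strictMono hab⟩

def relabelEquiv (e : A ≃o B) : StrictFillings s A ≃ StrictFillings s B where
  toFun := relabel e
  invFun := relabel e.symm
  left_inv T := by ext x; simp [relabel]
  right_inv T := by ext x; simp [relabel]

def equivSigmaLabels : StrictFillings s A ≃ Σ S : A.powersetCard #s, StrictFillings s S where
  toFun T := ⟨⟨univ.image T.1, mem_powersetCard.2
      ⟨image_subset_iff.2 fun x _ => T.2.2.1 x, by rw [card_image_of_injective _ T.2.1]; simp⟩⟩,
    ⟨T.1, T.2.1, fun x => mem_image_of_mem _ (mem_univ x), T.2.2.2⟩⟩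
  invFun P := ⟨P.2.1, P.2.2.1, fun x => (mem_powersetCard.1 P.1.2).1 (P.2.2.2.1 x), P.2.2.2.2⟩
  left_inv _ := rfl
  right_inv P := by
    refine Sigma.subtype_ext (Subtype.ext ?_) rfl
    refine eq_of_subset_of_card_le (image_subset_iff.2 fun x _ => P.2.2.2.1 x) ?_
    rw [card_image_of_injective _ P.2.2.1, (mem_powersetCard.1 P.1.2).2]
    simp

end StrictFillings

lemma sytCountCells_eq_card_strictFillings (s : Finset (ℕ × ℕ)) :
    sytCountCells s = Nat.card (StrictFillings s (range #s)) :=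
  Nat.card_congr (Equiv.subtypeEquivRight fun T => by simp only [IsRowColStrict, mem_range])

theorem card_strictFillings (s : Finset (ℕ × ℕ)) (A : Finset ℕ) :
    Nat.card (StrictFillings s A) = (#A).choose #s * sytCountCells s := by
  have standardize (S : A.powersetCard #s) : StrictFillings s S ≃ StrictFillings s (range #s) :=
    StrictFillings.relabelEquiv <| (S.1.orderIsoOfFin (mem_powersetCard.1 S.2).2).symm.trans
      ((range #s).orderIsoOfFin (card_range _))
  rw [Nat.card_congr (StrictFillings.equivSigmaLabels.trans
      ((Equiv.sigmaCongrRight standardize).trans (Equiv.sigmaEquivProd _ _))),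
    Nat.card_prod, Nat.card_eq_fintype_card, Fintype.card_coe, card_powersetCard,
    sytCountCells_eq_card_strictFillings]

end StrictFillings

lemma mem_colD_cells {i : ℕ} {c : ℕ × ℕ} : c ∈ (colD i).cells ↔ c.2 = 0 ∧ c.1 < i := by
  simp [colD, rowD, YoungDiagram.mem_ofRowLens, List.getElem_singleton]

lemma card_colD_cells (i : ℕ) : #(colD i).cells = i := by
  have : (colD i).cells = range i ×ˢ {0} := by
    ext c
    rw [mem_colD_cells, mem_product, mem_range, mem_singleton, and_comm]
  simp [this]

section Tableaux

variable {mu : YoungDiagram}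

lemma row_succ_le_of_colStrict {T : mu.cells → ℕ} (hpos : ∀ x, 1 ≤ T x)
    (hcol : ∀ a b : mu.cells, a.1.2 = b.1.2 → a.1.1 < b.1.1 → T a < T b) (x : mu.cells) :
    x.1.1 + 1 ≤ T x := by
  obtain ⟨⟨r, c⟩, hx⟩ := x
  induction r with
  | zero => exact hpos _
  | succ r ih =>
    have hup : (r, c) ∈ mu.cells := mu.up_left_mem (Nat.le_succ r) le_rfl hx
    exact (ih hup).trans_lt (hcol ⟨_, hup⟩ ⟨_, hx⟩ rfl (Nat.lt_succ_self r))

lemma column_label_eq {T : mu.cells → ℕ} {i : ℕ} (hpos : ∀ x, 1 ≤ T x)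
    (hcol : ∀ a b : mu.cells, a.1.2 = b.1.2 → a.1.1 < b.1.1 → T a < T b)
    (hlab : ∀ m : ℕ, 1 ≤ m → m ≤ i → ∃ x : mu.cells, x.1.2 = 0 ∧ T x = m) {j : ℕ} (hj : j < i) :
    ∃ h : (j, 0) ∈ mu.cells, T ⟨(j, 0), h⟩ = j + 1 := by
  induction j using Nat.strong_induction_on with
  | _ j ih =>
    obtain ⟨⟨⟨r, c⟩, hx⟩, hc : c = 0, hTx⟩ := hlab (j + 1) (by omega) (by omega)
    subst hc
    have hrj : r ≤ j := by simpa [hTx] using row_succ_le_of_colStrict hpos hcol ⟨_, hx⟩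
    obtain hrj | rfl := hrj.lt_or_eq
    · obtain ⟨_, hr⟩ := ih r hrj (by omega)
      omega
    · exact ⟨hx, hTx⟩

section ExtendColumn

variable {i : ℕ} (U : (mu.cells \ (colD i).cells : Finset (ℕ × ℕ)) → ℕ)

noncomputable def extendColumn (x : mu.cells) : ℕ :=
  if h : x.1 ∈ (colD i).cells then x.1.1 + 1 else U ⟨x.1, mem_sdiff.2 ⟨x.2, h⟩⟩

variable {U}

lemma extendColumn_lt_extendColumn (hU : ∀ y, i < U y) {a b : mu.cells} (hab : a.1 ≤ b.1)
    (hne : a ≠ b)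
    (hlt : ∀ ha hb, U ⟨a.1, mem_sdiff.2 ⟨a.2, ha⟩⟩ < U ⟨b.1, mem_sdiff.2 ⟨b.2, hb⟩⟩) :
    extendColumn U a < extendColumn U b := by
  have hne' : a.1.1 ≠ b.1.1 ∨ a.1.2 ≠ b.1.2 := by
    by_contra! h
    exact hne (Subtype.ext (Prod.ext h.1 h.2))
  have := Prod.le_def.1 hab
  unfold extendColumn
  split_ifs with ha hb hb
  · rw [mem_colD_cells] at ha hb
    omega
  · exact Nat.lt_of_le_of_lt (mem_colD_cells.1 ha).2 (hU _)
  · rw [mem_colD_cells] at hb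
    exact absurd (mem_colD_cells.2 ⟨by omega, by omega⟩) ha
  · exact hlt ha hb

lemma extendColumn_injective (hU : ∀ y, i < U y) (hinj : Function.Injective U) :
    Function.Injective (extendColumn U) := by
  intro a b hab
  unfold extendColumn at hab
  split_ifs at hab with ha hb hb
  · rw [mem_colD_cells] at ha hb
    exact Subtype.ext (Prod.ext (by omega) (by omega))
  · exact absurd hab (Nat.lt_of_le_of_lt (mem_colD_cells.1 ha).2 (hU _)).ne
  · exact absurd hab (Nat.lt_of_le_of_lt (mem_colD_cells.1 hb).2 (hU _)).ne'
  · exact Subtype.ext (Subtype.mk.inj (hinj hab))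

lemma extendColumn_of_notMem {x : mu.cells} (hx : x.1 ∉ (colD i).cells) :
    extendColumn U x = U ⟨x.1, mem_sdiff.2 ⟨x.2, hx⟩⟩ :=
  dif_neg hx

end ExtendColumn

variable (mu) in
def ColumnTableaux (n i : ℕ) : Type :=
  {T : mu.cells → ℕ // Function.Injective T ∧ (∀ x, 1 ≤ T x ∧ T x ≤ n) ∧
    (∀ a b : mu.cells, a.1.1 = b.1.1 → a.1.2 < b.1.2 → T a < T b) ∧
    (∀ a b : mu.cells, a.1.2 = b.1.2 → a.1.1 < b.1.1 → T a < T b) ∧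
    (∀ m : ℕ, 1 ≤ m → m ≤ i → ∃ x : mu.cells, x.1.2 = 0 ∧ T x = m)}

namespace ColumnTableaux

variable {n i : ℕ} (T : ColumnTableaux mu n i)

lemma exists_apply_eq {j : ℕ} (hj : j < i) :
    ∃ h : (j, 0) ∈ mu.cells, T.1 ⟨(j, 0), h⟩ = j + 1 :=
  column_label_eq (fun x => (T.2.2.1 x).1) T.2.2.2.2.1 T.2.2.2.2.2 hj

lemma colD_le (T : ColumnTableaux mu n i) : colD i ≤ mu := by
  rw [← YoungDiagram.cells_subset_iff]
  rintro ⟨r, c⟩ hc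
  obtain ⟨rfl, hr⟩ := mem_colD_cells.1 hc
  exact (T.exists_apply_eq hr).1

lemma apply_of_mem {x : mu.cells} (hx : x.1 ∈ (colD i).cells) : T.1 x = x.1.1 + 1 := by
  obtain ⟨⟨r, c⟩, _⟩ := x
  obtain ⟨rfl, hr⟩ := mem_colD_cells.1 hx
  exact (T.exists_apply_eq hr).2

lemma lt_apply_of_notMem {x : mu.cells} (hx : x.1 ∉ (colD i).cells) : i < T.1 x := by
  by_contra! h
  have hpos := (T.2.2.1 x).1
  obtain ⟨hmem, hval⟩ := T.exists_apply_eq (j := T.1 x - 1) (by omega)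
  have hx' : x = ⟨_, hmem⟩ := T.2.1 (by omega)
  apply hx
  rw [hx', mem_colD_cells]
  exact ⟨rfl, by dsimp only; omega⟩

def restrict : StrictFillings (mu.cells \ (colD i).cells) (Icc (i + 1) n) :=
  ⟨fun x => T.1 ⟨x.1, (mem_sdiff.1 x.2).1⟩,
    fun _ _ h => Subtype.ext (Subtype.mk.inj (T.2.1 h)),
    fun x => mem_Icc.2 ⟨T.lt_apply_of_notMem (mem_sdiff.1 x.2).2, (T.2.2.1 _).2⟩,
    fun a b => T.2.2.2.1 ⟨a.1, _⟩ ⟨b.1, _⟩, fun a b => T.2.2.2.2.1 ⟨a.1, _⟩ ⟨b.1, _⟩⟩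

noncomputable def ofStrictFilling (hle : colD i ≤ mu) (hin : i ≤ n)
    (U : StrictFillings (mu.cells \ (colD i).cells) (Icc (i + 1) n)) : ColumnTableaux mu n i :=
  have hU (y) : i + 1 ≤ U.1 y ∧ U.1 y ≤ n := mem_Icc.1 (U.2.2.1 y)
  ⟨extendColumn U.1, extendColumn_injective (fun y => (hU y).1) U.2.1,
    fun x => by
      unfold extendColumn
      split_ifs with hx
      · have := (mem_colD_cells.1 hx).2
        omega
      · have := hU ⟨x.1, mem_sdiff.2 ⟨x.2, hx⟩⟩
        omega,
    fun a b h₁ h₂ => extendColumn_lt_extendColumn (fun y => (hU y).1)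
      (Prod.le_def.2 ⟨h₁.le, h₂.le⟩) (fun h => h₂.ne (congrArg (·.1.2) h))
      (fun _ _ => U.2.2.2.1 _ _ h₁ h₂),
    fun a b h₁ h₂ => extendColumn_lt_extendColumn (fun y => (hU y).1)
      (Prod.le_def.2 ⟨h₂.le, h₁.le⟩) (fun h => h₂.ne (congrArg (·.1.1) h))
      (fun _ _ => U.2.2.2.2 _ _ h₁ h₂),
    fun m hm₁ hmi => by
      have hcol : (m - 1, 0) ∈ (colD i).cells := mem_colD_cells.2 ⟨rfl, by omega⟩
      refine ⟨⟨_, YoungDiagram.cells_subset_iff.2 hle hcol⟩, rfl, ?_⟩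
      rw [extendColumn, dif_pos hcol]
      exact Nat.sub_add_cancel hm₁⟩

noncomputable def equivStrictFillings (hle : colD i ≤ mu) (hin : i ≤ n) :
    ColumnTableaux mu n i ≃ StrictFillings (mu.cells \ (colD i).cells) (Icc (i + 1) n) where
  toFun := restrict
  invFun := ofStrictFilling hle hin
  left_inv T := by
    refine Subtype.ext (funext fun x => ?_)
    by_cases hx : x.1 ∈ (colD i).cells
    · simp [ofStrictFilling, extendColumn, hx, T.apply_of_mem hx]
    · simp [ofStrictFilling, extendColumn_of_notMem hx, restrict]
  right_inv U := by
    ext x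
    simp [ofStrictFilling, restrict, extendColumn_of_notMem (x := ⟨x.1, _⟩) (mem_sdiff.1 x.2).2]

end ColumnTableaux

end Tableaux

theorem choose_mul_sytSkew_column_general (n k i : ℕ) (hkn : k ≤ n)
    (mu : YoungDiagram) (hmu : mu.card = k) :
    (n - i).choose (k - i) * sytSkew mu (colD i) =
      Nat.card {T : mu.cells → ℕ //
        Function.Injective T ∧ (∀ x, 1 ≤ T x ∧ T x ≤ n) ∧
        (∀ a b : mu.cells, a.1.1 = b.1.1 → a.1.2 < b.1.2 → T a < T b) ∧
        (∀ a b : mu.cells, a.1.2 = b.1.2 → a.1.1 < b.1.1 → T a < T b) ∧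
        (∀ m : ℕ, 1 ≤ m → m ≤ i → ∃ x : mu.cells, x.1.2 = 0 ∧ T x = m)} := by
  change _ = Nat.card (ColumnTableaux mu n i)
  by_cases hle : colD i ≤ mu
  · have hsub := YoungDiagram.cells_subset_iff.2 hle
    have hik : i ≤ k := hmu ▸ card_colD_cells i ▸ card_le_card hsub
    rw [sytSkew, if_pos hle,
      Nat.card_congr (ColumnTableaux.equivStrictFillings hle (hik.trans hkn)), card_strictFillings,
      Nat.card_Icc, Nat.add_sub_add_right, card_sdiff_of_subset hsub,
      card_colD_cells, ← hmu]
  · rw [sytSkew, if_neg hle, mul_zero, eq_comm, Nat.card_eq_zero]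
    exact Or.inl ⟨fun T => hle T.colD_le⟩

/-- for a partition `μ` of `k` and `i ≤ k ≤ n`,
`C(n-i, k-i) · f^{μ/(1^i)}` equals the number of fillings of `μ` by distinct elements of
`{1,…,n}`, strictly increasing along rows and columns, in which the labels `1,…,i` all
appear in the first column. -/
theorem choose_mul_sytSkew_column (n k i : ℕ) (hik : i ≤ k) (hkn : k ≤ n)
    (mu : YoungDiagram) (hmu : mu.card = k) :
    (n - i).choose (k - i) * sytSkew mu (colD i) =
      Nat.card {T : mu.cells → ℕ //
        Function.Injective T ∧ (∀ x, 1 ≤ T x ∧ T x ≤ n) ∧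
        (∀ a b : mu.cells, a.1.1 = b.1.1 → a.1.2 < b.1.2 → T a < T b) ∧
        (∀ a b : mu.cells, a.1.2 = b.1.2 → a.1.1 < b.1.1 → T a < T b) ∧
        (∀ m : ℕ, 1 ≤ m → m ≤ i → ∃ x : mu.cells, x.1.2 = 0 ∧ T x = m)} :=
  choose_mul_sytSkew_column_general n k i hkn mu hmu
end

section
/- Bijection between standard tableaux of shifted shape and pairs: for a partition μ of k with fewer than n parts, the number of standard Young tableaux of shape μ + (1^{n-1}) equals the number of pairs (S,T) where S is a semistandard Young tableau of shape (k) (a single row of k boxes) with entries in {1,...,n} and T is a standard Young tableau of shape μ, such that for each i, if i appears in row r of T, then the i-th smallest entry of S (with ties broken by reading position) is strictly greater than r. -/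
open MvPolynomial Finset
open scoped Classical

/-- The cells of the partition `μ + (1^m)` obtained by adding one box to each of the first
`m` rows of `μ` (padding `μ` with zero rows as needed). -/
noncomputable def addColCells (mu : YoungDiagram) (m : ℕ) : Finset (ℕ × ℕ) :=
  (Finset.range (mu.colLen 0 + m) ×ˢ Finset.range (mu.rowLen 0 + 1)).filter
    (fun p => p.2 < mu.rowLen p.1 + (if p.1 < m then 1 else 0))

/-!
The cells of `λ = μ + (1^m)`, `m = n - 1 ≥ ℓ(μ)`, are a new first column of height `m` together
with a copy of `μ` shifted one step to the right, so a standard filling of `λ` is an increasing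
filling of the column interleaved with a standard filling of `μ`. Standardising the values on the
copy of `μ` gives `T`, and `S v - 1` counts the column entries below the `(v+1)`-st smallest value
on `μ`, so `S` is weakly increasing with values in `[1, n]`. Conversely, the cell of `μ` labelled
`w` receives `w + (S w - 1)` and the column cell in row `i` receives `i + #{v | S v ≤ i + 1}`.
The only relations of `λ` between the column and `μ` are `(i, 0) < (i, j + 1)`, and under this
correspondence they read `i + 1 < S (T (i, j))`.
-/

section Rank

variable {α : Type*}

lemma card_filter_lt_mono (s : Finset α) (g : α → ℕ) :
    Monotone fun t => #{y ∈ s | g y < t} :=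
  fun _ _ h => card_le_card (monotone_filter_right s fun _ _ hy => lt_of_lt_of_le hy h)

variable {s : Finset α} {g : α → ℕ}

lemma card_filter_lt_lt_card_filter_lt {x : α} (hx : x ∈ s) {t : ℕ} (h : g x < t) :
    #{y ∈ s | g y < g x} < #{y ∈ s | g y < t} :=
  card_lt_card <| (ssubset_iff_of_subset (monotone_filter_right s fun _ _ hy => hy.trans h)).2
    ⟨x, mem_filter.2 ⟨hx, h⟩, by simp⟩

lemma card_filter_lt_le_card_filter_lt_iff {x : α} (hx : x ∈ s) {t : ℕ} :
    #{y ∈ s | g y < t} ≤ #{y ∈ s | g y < g x} ↔ t ≤ g x := by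
  refine ⟨fun h => ?_, fun h => card_filter_lt_mono s g h⟩
  by_contra! hlt
  exact (card_filter_lt_lt_card_filter_lt hx hlt).not_ge h

lemma image_eq_range_of_injOn (hinj : Set.InjOn g s) (hlt : ∀ a ∈ s, g a < #s) :
    s.image g = range #s :=
  eq_of_subset_of_card_le
    (fun t ht => by obtain ⟨a, ha, rfl⟩ := mem_image.1 ht; simpa using hlt a ha)
    (by rw [card_range, card_image_of_injOn hinj])

lemma card_filter_comp_of_injOn (hinj : Set.InjOn g s) (hlt : ∀ a ∈ s, g a < #s)
    (P : ℕ → Prop) [DecidablePred P] :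
    #{y ∈ s | P (g y)} = #{t ∈ range #s | P t} := by
  rw [← image_eq_range_of_injOn hinj hlt, filter_image,
    card_image_of_injOn (hinj.mono (filter_subset _ s))]

lemma card_filter_lt_of_injOn (hinj : Set.InjOn g s) (hlt : ∀ a ∈ s, g a < #s) {x : α}
    (hx : x ∈ s) : #{y ∈ s | g y < g x} = g x := by
  rw [card_filter_comp_of_injOn hinj hlt (· < g x), ← card_range (g x)]
  congr 1
  ext t
  simpa using fun h => h.trans (hlt x hx)

lemma Fin.card_filter_univ_comp_val {N : ℕ} (P : ℕ → Prop) [DecidablePred P] :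
    #{i : Fin N | P i} = #{t ∈ range N | P t} := by
  simpa using card_filter_comp_of_injOn (s := univ) Fin.val_injective.injOn (by simp) P

end Rank

section Shape

variable (mu : YoungDiagram) {m : ℕ}

lemma YoungDiagram.rowLen_eq_zero_of_colLen_le {i : ℕ} (h : mu.colLen 0 ≤ i) :
    mu.rowLen i = 0 := by
  by_contra hr
  have := YoungDiagram.mem_iff_lt_colLen.1
    (YoungDiagram.mem_iff_lt_rowLen.2 (Nat.pos_of_ne_zero hr))
  omega

lemma addColCells_eq (hm : mu.colLen 0 ≤ m) :
    addColCells mu m = univ.image (fun i : Fin m => ((i : ℕ), 0)) ∪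
      mu.cells.image fun y => (y.1, y.2 + 1) := by
  ext ⟨i, j⟩
  simp only [addColCells, mem_filter, mem_product, mem_range, mem_union, mem_image, mem_univ,
    true_and, YoungDiagram.mem_cells, Prod.exists, Prod.mk.injEq]
  constructor
  · rintro ⟨-, hj⟩
    split_ifs at hj with him
    · rcases j with _ | j
      · exact Or.inl ⟨⟨i, him⟩, rfl, rfl⟩
      · exact Or.inr ⟨i, j, YoungDiagram.mem_iff_lt_rowLen.2 (by omega), rfl, rfl⟩
    · have := mu.rowLen_eq_zero_of_colLen_le (i := i) (by omega)
      omega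
  · rintro (⟨i, rfl, rfl⟩ | ⟨a, b, hab, rfl, rfl⟩)
    · simp only [i.2, if_true]
      omega
    · have hb := YoungDiagram.mem_iff_lt_rowLen.1 hab
      have ha := YoungDiagram.mem_iff_lt_colLen.1 (mu.up_left_mem le_rfl (Nat.zero_le b) hab)
      have := mu.rowLen_anti 0 a (Nat.zero_le a)
      simp only [show a < m by omega, if_true]
      omega

lemma mem_addColCells (hm : mu.colLen 0 ≤ m) {p : ℕ × ℕ} :
    p ∈ addColCells mu m ↔
      (∃ i : Fin m, ((i : ℕ), 0) = p) ∨ ∃ y ∈ mu.cells, (y.1, y.2 + 1) = p := by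
  simp [addColCells_eq mu hm]

lemma col_mem_addColCells (hm : mu.colLen 0 ≤ m) (i : Fin m) :
    ((i : ℕ), 0) ∈ addColCells mu m :=
  (mem_addColCells mu hm).2 (Or.inl ⟨i, rfl⟩)

lemma shift_mem_addColCells (hm : mu.colLen 0 ≤ m) {y : ℕ × ℕ} (hy : y ∈ mu.cells) :
    (y.1, y.2 + 1) ∈ addColCells mu m :=
  (mem_addColCells mu hm).2 (Or.inr ⟨y, hy, rfl⟩)

lemma disjoint_col_shift :
    Disjoint (univ.image fun i : Fin m => ((i : ℕ), 0))
      (mu.cells.image fun y => (y.1, y.2 + 1)) := by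
  simp [disjoint_left]

lemma shift_injective : Function.Injective fun y : ℕ × ℕ => (y.1, y.2 + 1) := by
  intro a b h
  simp only [Prod.mk.injEq, add_left_inj] at h
  exact Prod.ext h.1 h.2

lemma card_addColCells (hm : mu.colLen 0 ≤ m) : #(addColCells mu m) = mu.card + m := by
  rw [addColCells_eq mu hm, card_union_of_disjoint (disjoint_col_shift mu),
    card_image_of_injective _ shift_injective,
    card_image_of_injective _ fun a b h => Fin.ext (congrArg Prod.fst h)]
  simp [add_comm]

lemma card_filter_addColCells (hm : mu.colLen 0 ≤ m) (f : ℕ × ℕ → ℕ) (t : ℕ) :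
    #{p ∈ addColCells mu m | f p < t} =
      #{i : Fin m | f (i, 0) < t} + #{y ∈ mu.cells | f (y.1, y.2 + 1) < t} := by
  rw [addColCells_eq mu hm, filter_union,
    card_union_of_disjoint (disjoint_filter_filter (disjoint_col_shift mu)), filter_image,
    filter_image, card_image_of_injective _ shift_injective,
    card_image_of_injective _ fun a b h => Fin.ext (congrArg Prod.fst h)]

end Shape

section Slots

variable {k : ℕ} (S : Fin k → ℕ)

noncomputable def colSlot (i : ℕ) : ℕ := i + #{v | S v ≤ i + 1}

noncomputable def bodySlot (w : ℕ) : ℕ := if h : w < k then w + (S ⟨w, h⟩ - 1) else 0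

variable {S}

lemma bodySlot_of_lt {w : ℕ} (hw : w < k) : bodySlot S w = w + (S ⟨w, hw⟩ - 1) := dif_pos hw

lemma colSlot_strictMono : StrictMono (colSlot S) := fun i i' h => by
  have : #{v | S v ≤ i + 1} ≤ #{v | S v ≤ i' + 1} :=
    card_le_card fun v hv => by simp only [mem_filter, mem_univ, true_and] at hv ⊢; omega
  exact Nat.add_lt_add_of_lt_of_le h this

lemma colSlot_le (i : ℕ) : colSlot S i ≤ i + k := by
  have := card_filter_le univ fun v => S v ≤ i + 1
  simp only [card_univ, Fintype.card_fin] at this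
  exact Nat.add_le_add_left this i

lemma bodySlot_lt_bodySlot_iff (hS : Monotone S) {w w' : ℕ} (hw : w < k) (hw' : w' < k) :
    bodySlot S w < bodySlot S w' ↔ w < w' := by
  rw [bodySlot_of_lt hw, bodySlot_of_lt hw']
  constructor
  · intro h
    by_contra! hle
    have := hS (show (⟨w', hw'⟩ : Fin k) ≤ ⟨w, hw⟩ from hle)
    omega
  · intro h
    have := hS (show (⟨w, hw⟩ : Fin k) ≤ ⟨w', hw'⟩ from h.le)
    omega

lemma bodySlot_lt_colSlot_iff (hS : Monotone S) (w : Fin k) (i : ℕ) :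
    bodySlot S w < colSlot S i ↔ S w ≤ i + 1 := by
  have key := Tuple.lt_card_le_iff_apply_le_of_monotone hS (j := w) (a := i + 1)
  rw [bodySlot_of_lt w.2, Fin.eta, colSlot]
  constructor
  · intro h
    by_contra! hlt
    have := key.not.2 hlt.not_ge
    omega
  · intro h
    have := key.2 h
    omega

lemma colSlot_lt_bodySlot_iff (hS : Monotone S) (w : Fin k) (i : ℕ) :
    colSlot S i < bodySlot S w ↔ i + 1 < S w := by
  have key := Tuple.lt_card_le_iff_apply_le_of_monotone hS (j := w) (a := i + 1)
  rw [bodySlot_of_lt w.2, Fin.eta, colSlot]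
  constructor
  · intro h
    by_contra! hle
    have := key.2 hle
    omega
  · intro h
    have := key.not.2 h.not_ge
    omega

lemma colSlot_ne_bodySlot (hS : Monotone S) (w : Fin k) (i : ℕ) : colSlot S i ≠ bodySlot S w :=
  fun h => ((bodySlot_lt_colSlot_iff hS w i).2
    (not_lt.1 ((colSlot_lt_bodySlot_iff hS w i).not.1 h.not_lt))).ne' h

lemma bodySlot_strictMonoOn (hS : Monotone S) : StrictMonoOn (bodySlot S) (Set.Iio k) :=
  fun _ hw _ hw' h => (bodySlot_lt_bodySlot_iff hS hw hw').2 h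

end Slots

section StandardFillings

structure IsStandardOn (s : Finset (ℕ × ℕ)) (f : ℕ × ℕ → ℕ) : Prop where
  injOn : Set.InjOn f s
  lt_card : ∀ p ∈ s, f p < #s
  row_lt : ∀ p ∈ s, ∀ q ∈ s, p.1 = q.1 → p.2 < q.2 → f p < f q
  col_lt : ∀ p ∈ s, ∀ q ∈ s, p.2 = q.2 → p.1 < q.1 → f p < f q

lemma IsStandardOn.congr {s : Finset (ℕ × ℕ)} {f g : ℕ × ℕ → ℕ} (hf : IsStandardOn s f)
    (hfg : Set.EqOn f g s) : IsStandardOn s g where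
  injOn := hf.injOn.congr hfg
  lt_card p hp := hfg hp ▸ hf.lt_card p hp
  row_lt p hp q hq := hfg hp ▸ hfg hq ▸ hf.row_lt p hp q hq
  col_lt p hp q hq := hfg hp ▸ hfg hq ▸ hf.col_lt p hp q hq

variable {α : Type*} {s : Finset α}

noncomputable def extendZero (U : s → ℕ) (p : α) : ℕ := if h : p ∈ s then U ⟨p, h⟩ else 0

@[simp]
lemma extendZero_coe (U : s → ℕ) (x : s) : extendZero U x = U x := dif_pos x.2

lemma extendZero_of_mem (U : s → ℕ) {p : α} (hp : p ∈ s) : extendZero U p = U ⟨p, hp⟩ :=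
  dif_pos hp

lemma extendZero_restrict_eqOn (g : α → ℕ) : Set.EqOn (extendZero fun x : s => g x) g s :=
  fun _ hp => extendZero_of_mem _ hp

lemma injOn_extendZero {U : s → ℕ} (hU : Function.Injective U) : Set.InjOn (extendZero U) s :=
  fun a ha b hb h => by
    rw [extendZero_of_mem U ha, extendZero_of_mem U hb] at h
    exact congrArg Subtype.val (hU h)

lemma extendZero_lt {U : s → ℕ} {N : ℕ} (hU : ∀ x, U x < N) : ∀ p ∈ s, extendZero U p < N :=
  fun _ hp => extendZero_of_mem U hp ▸ hU _

lemma isStandardOn_extendZero_iff {s : Finset (ℕ × ℕ)} {U : s → ℕ} :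
    IsStandardOn s (extendZero U) ↔
      Function.Injective U ∧ (∀ x, U x < s.card) ∧
      (∀ a b : s, a.1.1 = b.1.1 → a.1.2 < b.1.2 → U a < U b) ∧
      (∀ a b : s, a.1.2 = b.1.2 → a.1.1 < b.1.1 → U a < U b) := by
  constructor
  · rintro ⟨hinj, hlt, hrow, hcol⟩
    refine ⟨fun a b h => Subtype.ext (hinj a.2 b.2 (by simpa using h)), fun x => ?_,
      fun a b => ?_, fun a b => ?_⟩
    · simpa using hlt x x.2
    · simpa using hrow a a.2 b b.2
    · simpa using hcol a a.2 b b.2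
  · rintro ⟨hinj, hlt, hrow, hcol⟩
    refine ⟨injOn_extendZero hinj, fun p hp => ?_, fun p hp q hq => ?_, fun p hp q hq => ?_⟩
    · simpa [extendZero_of_mem U hp] using hlt ⟨p, hp⟩
    · simpa [extendZero_of_mem U hp, extendZero_of_mem U hq] using hrow ⟨p, hp⟩ ⟨q, hq⟩
    · simpa [extendZero_of_mem U hp, extendZero_of_mem U hq] using hcol ⟨p, hp⟩ ⟨q, hq⟩

end StandardFillings

def IsAdmissiblePair (mu : YoungDiagram) (k n : ℕ) (S : Fin k → ℕ) (T : mu.cells → ℕ) : Prop :=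
  Monotone S ∧ (∀ i, 1 ≤ S i ∧ S i ≤ n) ∧
    Function.Injective T ∧ (∀ x, T x < k) ∧
    (∀ a b : mu.cells, a.1.1 = b.1.1 → a.1.2 < b.1.2 → T a < T b) ∧
    (∀ a b : mu.cells, a.1.2 = b.1.2 → a.1.1 < b.1.1 → T a < T b) ∧
    (∀ (x : mu.cells) (h : T x < k), x.1.1 + 1 < S ⟨T x, h⟩)

section Forward

variable (mu : YoungDiagram) (m k : ℕ) (f : ℕ × ℕ → ℕ)

noncomputable def bodyRank (t : ℕ) : ℕ := #{y ∈ mu.cells | f (y.1, y.2 + 1) < t}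

noncomputable def tableauOf : mu.cells → ℕ := fun x => bodyRank mu f (f (x.1.1, x.1.2 + 1))

noncomputable def sequenceOf : Fin k → ℕ :=
  fun v => 1 + #{i : Fin m | bodyRank mu f (f (i, 0)) ≤ v}

variable {mu m k f}

lemma bodyRank_le_card (t : ℕ) : bodyRank mu f t ≤ mu.card := card_filter_le _ _

lemma tableauOf_lt_card (x : mu.cells) : tableauOf mu f x < mu.card :=
  card_lt_card <| (ssubset_iff_of_subset (filter_subset _ _)).2 ⟨x, x.2, by simp⟩

lemma tableauOf_lt_tableauOf {y z : mu.cells}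
    (h : f (y.1.1, y.1.2 + 1) < f (z.1.1, z.1.2 + 1)) : tableauOf mu f y < tableauOf mu f z :=
  card_filter_lt_lt_card_filter_lt (g := fun y : ℕ × ℕ => f (y.1, y.2 + 1)) y.2 h

lemma sequenceOf_monotone : Monotone (sequenceOf mu m k f) := fun v w h =>
  Nat.add_le_add_left (card_le_card fun i hi => by
    simp only [mem_filter, mem_univ, true_and] at hi ⊢
    exact hi.trans (Fin.le_def.1 h)) 1

lemma sequenceOf_mem_Icc (v : Fin k) : sequenceOf mu m k f v ∈ Set.Icc 1 (m + 1) := by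
  have := card_filter_le univ fun i : Fin m => bodyRank mu f (f (i, 0)) ≤ v
  simp only [card_univ, Fintype.card_fin] at this
  exact ⟨Nat.le_add_right 1 _, by rw [sequenceOf]; omega⟩

lemma IsStandardOn.col_strictMono (hm : mu.colLen 0 ≤ m)
    (hf : IsStandardOn (addColCells mu m) f) : StrictMono fun i : Fin m => f (i, 0) := fun i i' h =>
  hf.col_lt _ (col_mem_addColCells mu hm i) _ (col_mem_addColCells mu hm i') rfl h

lemma IsStandardOn.card_col_lt_col (hm : mu.colLen 0 ≤ m)
    (hf : IsStandardOn (addColCells mu m) f) (i : Fin m) :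
    #{j : Fin m | f (j, 0) < f (i, 0)} = i := by
  simp_rw [(hf.col_strictMono hm).lt_iff_lt, filter_gt_eq_Iio, Fin.card_Iio]

lemma IsStandardOn.eq_card_col_add_bodyRank (hm : mu.colLen 0 ≤ m)
    (hf : IsStandardOn (addColCells mu m) f) {p : ℕ × ℕ} (hp : p ∈ addColCells mu m) :
    f p = #{i : Fin m | f (i, 0) < f p} + bodyRank mu f (f p) := by
  rw [bodyRank, ← card_filter_addColCells mu hm, card_filter_lt_of_injOn hf.injOn hf.lt_card hp]

lemma IsStandardOn.sequenceOf_le_iff (hm : mu.colLen 0 ≤ m)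
    (hf : IsStandardOn (addColCells mu m) f) (i : Fin m) (v : Fin k) :
    sequenceOf mu m k f v ≤ i + 1 ↔ (v : ℕ) < bodyRank mu f (f (i, 0)) := by
  have key := Tuple.lt_card_le_iff_apply_le_of_monotone (j := i) (a := (v : ℕ))
    (f := fun j : Fin m => bodyRank mu f (f (j, 0)))
    fun j j' h => card_filter_lt_mono _ _ ((hf.col_strictMono hm).monotone h)
  rw [sequenceOf, add_comm, Nat.add_le_add_iff_right, ← not_lt, key, not_le]

lemma IsStandardOn.row_add_one_lt_sequenceOf (hm : mu.colLen 0 ≤ m)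
    (hf : IsStandardOn (addColCells mu m) f) (x : mu.cells) (h : tableauOf mu f x < k) :
    x.1.1 + 1 < sequenceOf mu m k f ⟨tableauOf mu f x, h⟩ := by
  have hxm : x.1.1 < m :=
    (YoungDiagram.mem_iff_lt_colLen.1 (mu.up_left_mem le_rfl (Nat.zero_le _) x.2)).trans_le hm
  have hlt : f (x.1.1, 0) < f (x.1.1, x.1.2 + 1) :=
    hf.row_lt _ (col_mem_addColCells mu hm ⟨x.1.1, hxm⟩) _ (shift_mem_addColCells mu hm x.2) rfl
      (Nat.succ_pos _)
  rw [← not_le, hf.sequenceOf_le_iff hm ⟨x.1.1, hxm⟩, not_lt]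
  exact card_filter_lt_mono _ _ hlt.le

lemma IsStandardOn.isAdmissiblePair (hm : mu.colLen 0 ≤ m) (hmu : mu.card = k)
    (hf : IsStandardOn (addColCells mu m) f) :
    IsAdmissiblePair mu k (m + 1) (sequenceOf mu m k f) (tableauOf mu f) := by
  have hsh {y : mu.cells} := shift_mem_addColCells mu hm y.2
  refine ⟨sequenceOf_monotone, sequenceOf_mem_Icc, fun a b h => ?_,
    fun x => hmu ▸ tableauOf_lt_card x,
    fun a b h₁ h₂ => tableauOf_lt_tableauOf (hf.row_lt _ hsh _ hsh h₁ (by omega)),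
    fun a b h₁ h₂ => tableauOf_lt_tableauOf (hf.col_lt _ hsh _ hsh (by simp [h₁]) h₂),
    hf.row_add_one_lt_sequenceOf hm⟩
  by_contra hne
  have hfne : f (a.1.1, a.1.2 + 1) ≠ f (b.1.1, b.1.2 + 1) := fun he =>
    hne (Subtype.ext (shift_injective (hf.injOn hsh hsh he)))
  rcases hfne.lt_or_gt with hlt | hlt
  · exact (tableauOf_lt_tableauOf hlt).ne h
  · exact (tableauOf_lt_tableauOf hlt).ne' h

end Forward

section Reconstruction

noncomputable def fillingOf (mu : YoungDiagram) {k : ℕ} (S : Fin k → ℕ) (T : mu.cells → ℕ)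
    (p : ℕ × ℕ) : ℕ :=
  if p.2 = 0 then colSlot S p.1 else bodySlot S (extendZero T (p.1, p.2 - 1))

variable {mu : YoungDiagram} {m k : ℕ} {S : Fin k → ℕ} {T : mu.cells → ℕ}

lemma fillingOf_col (i : ℕ) : fillingOf mu S T (i, 0) = colSlot S i := if_pos rfl

lemma fillingOf_shift {y : ℕ × ℕ} (hy : y ∈ mu.cells) :
    fillingOf mu S T (y.1, y.2 + 1) = bodySlot S (T ⟨y, hy⟩) := by
  simp [fillingOf, extendZero_of_mem T hy]

lemma fillingOf_shift_lt_fillingOf_shift (hS : Monotone S) (hTlt : ∀ x, T x < k) {y z : ℕ × ℕ}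
    (hy : y ∈ mu.cells) (hz : z ∈ mu.cells) (h : T ⟨y, hy⟩ < T ⟨z, hz⟩) :
    fillingOf mu S T (y.1, y.2 + 1) < fillingOf mu S T (z.1, z.2 + 1) := by
  rw [fillingOf_shift hy, fillingOf_shift hz]
  exact (bodySlot_lt_bodySlot_iff hS (hTlt _) (hTlt _)).2 h

lemma fillingOf_injOn (hm : mu.colLen 0 ≤ m) (hS : Monotone S) (hT : Function.Injective T)
    (hTlt : ∀ x, T x < k) : Set.InjOn (fillingOf mu S T) (addColCells mu m) := by
  intro p hp q hq hpq
  rcases (mem_addColCells mu hm).1 hp with ⟨i, rfl⟩ | ⟨y, hy, rfl⟩ <;>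
    rcases (mem_addColCells mu hm).1 hq with ⟨j, rfl⟩ | ⟨z, hz, rfl⟩
  · rw [fillingOf_col, fillingOf_col] at hpq
    rw [Fin.val_injective (colSlot_strictMono.injective hpq)]
  · rw [fillingOf_col, fillingOf_shift hz] at hpq
    exact absurd hpq (colSlot_ne_bodySlot hS ⟨_, hTlt _⟩ i)
  · rw [fillingOf_col, fillingOf_shift hy] at hpq
    exact absurd hpq.symm (colSlot_ne_bodySlot hS ⟨_, hTlt _⟩ j)
  · rw [fillingOf_shift hy, fillingOf_shift hz] at hpq
    obtain rfl : y = z :=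
      congrArg Subtype.val (hT ((bodySlot_strictMonoOn hS).injOn (hTlt _) (hTlt _) hpq))
    rfl

lemma fillingOf_lt_card (hm : mu.colLen 0 ≤ m) (hmu : mu.card = k) (hSle : ∀ v, S v ≤ m + 1)
    (hTlt : ∀ x, T x < k) : ∀ p ∈ addColCells mu m, fillingOf mu S T p < #(addColCells mu m) := by
  intro p hp
  rw [card_addColCells mu hm, hmu]
  rcases (mem_addColCells mu hm).1 hp with ⟨i, rfl⟩ | ⟨y, hy, rfl⟩
  · have := colSlot_le (S := S) i
    rw [fillingOf_col]
    omega
  · have := hTlt ⟨y, hy⟩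
    have := hSle ⟨_, this⟩
    rw [fillingOf_shift hy, bodySlot_of_lt (hTlt _)]
    omega

lemma fillingOf_row_lt (hm : mu.colLen 0 ≤ m) (hS : Monotone S) (hTlt : ∀ x, T x < k)
    (hrow : ∀ a b : mu.cells, a.1.1 = b.1.1 → a.1.2 < b.1.2 → T a < T b)
    (hcond : ∀ (x : mu.cells) (h : T x < k), x.1.1 + 1 < S ⟨T x, h⟩) :
    ∀ p ∈ addColCells mu m, ∀ q ∈ addColCells mu m,
      p.1 = q.1 → p.2 < q.2 → fillingOf mu S T p < fillingOf mu S T q := by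
  intro p hp q hq h₁ h₂
  rcases (mem_addColCells mu hm).1 hq with ⟨j, rfl⟩ | ⟨z, hz, rfl⟩
  · exact absurd h₂ (Nat.not_lt_zero _)
  rcases (mem_addColCells mu hm).1 hp with ⟨i, rfl⟩ | ⟨y, hy, rfl⟩
  · rw [fillingOf_col, fillingOf_shift hz, colSlot_lt_bodySlot_iff hS ⟨_, hTlt _⟩ i,
      show (i : ℕ) = z.1 from h₁]
    exact hcond ⟨z, hz⟩ (hTlt _)
  · exact fillingOf_shift_lt_fillingOf_shift hS hTlt hy hz
      (hrow ⟨y, hy⟩ ⟨z, hz⟩ h₁ (Nat.lt_of_succ_lt_succ h₂))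

lemma fillingOf_col_lt (hm : mu.colLen 0 ≤ m) (hS : Monotone S) (hTlt : ∀ x, T x < k)
    (hcol : ∀ a b : mu.cells, a.1.2 = b.1.2 → a.1.1 < b.1.1 → T a < T b) :
    ∀ p ∈ addColCells mu m, ∀ q ∈ addColCells mu m,
      p.2 = q.2 → p.1 < q.1 → fillingOf mu S T p < fillingOf mu S T q := by
  intro p hp q hq h₁ h₂
  rcases (mem_addColCells mu hm).1 hp with ⟨i, rfl⟩ | ⟨y, hy, rfl⟩ <;>
    rcases (mem_addColCells mu hm).1 hq with ⟨j, rfl⟩ | ⟨z, hz, rfl⟩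
  · rw [fillingOf_col, fillingOf_col]
    exact colSlot_strictMono h₂
  · exact absurd h₁.symm (Nat.succ_ne_zero _)
  · exact absurd h₁ (Nat.succ_ne_zero _)
  · exact fillingOf_shift_lt_fillingOf_shift hS hTlt hy hz
      (hcol ⟨y, hy⟩ ⟨z, hz⟩ (Nat.succ_injective h₁) h₂)

lemma IsAdmissiblePair.isStandardOn_fillingOf (hm : mu.colLen 0 ≤ m) (hmu : mu.card = k)
    (h : IsAdmissiblePair mu k (m + 1) S T) :
    IsStandardOn (addColCells mu m) (fillingOf mu S T) := by
  obtain ⟨hS, hSmem, hT, hTlt, hrow, hcol, hcond⟩ := h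
  exact ⟨fillingOf_injOn hm hS hT hTlt, fillingOf_lt_card hm hmu (fun v => (hSmem v).2) hTlt,
    fillingOf_row_lt hm hS hTlt hrow hcond, fillingOf_col_lt hm hS hTlt hcol⟩

lemma bodyRank_fillingOf (t : ℕ) :
    bodyRank mu (fillingOf mu S T) t = #{y ∈ mu.cells | bodySlot S (extendZero T y) < t} :=
  congrArg card <| filter_congr fun y hy => by rw [fillingOf_shift hy, extendZero_of_mem T hy]

lemma tableauOf_fillingOf (hmu : mu.card = k) (hS : Monotone S) (hT : Function.Injective T)
    (hTlt : ∀ x, T x < k) : tableauOf mu (fillingOf mu S T) = T := by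
  subst hmu
  funext x
  have hlt := extendZero_lt hTlt
  rw [tableauOf, bodyRank_fillingOf, fillingOf_shift x.2]
  calc #{y ∈ mu.cells | bodySlot S (extendZero T y) < bodySlot S (T x)}
      = #{y ∈ mu.cells | extendZero T y < extendZero T x} :=
        congrArg card <| filter_congr fun y hy => by
          rw [← extendZero_coe T x]
          exact bodySlot_lt_bodySlot_iff hS (hlt y hy) (hlt x x.2)
    _ = T x := by rw [card_filter_lt_of_injOn (injOn_extendZero hT) hlt x.2, extendZero_coe]

lemma sequenceOf_fillingOf (hmu : mu.card = k) (hS : Monotone S)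
    (hSmem : ∀ v, 1 ≤ S v ∧ S v ≤ m + 1) (hT : Function.Injective T) (hTlt : ∀ x, T x < k) :
    sequenceOf mu m k (fillingOf mu S T) = S := by
  subst hmu
  funext v
  have hlt := extendZero_lt hTlt
  have hrank (i : ℕ) : bodyRank mu (fillingOf mu S T) (colSlot S i) = #{w | S w ≤ i + 1} := by
    rw [bodyRank_fillingOf,
      card_filter_comp_of_injOn (injOn_extendZero hT) hlt (bodySlot S · < colSlot S i),
      ← Fin.card_filter_univ_comp_val]
    exact congrArg card <| filter_congr fun w _ => bodySlot_lt_colSlot_iff hS w i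
  have hiff (i : Fin m) : #{w | S w ≤ i + 1} ≤ v ↔ (i : ℕ) < S v - 1 := by
    rw [← not_lt, Tuple.lt_card_le_iff_apply_le_of_monotone hS]
    omega
  simp_rw [sequenceOf, fillingOf_col, hrank, hiff, Fin.card_filter_val_lt]
  have := hSmem v
  omega

lemma IsStandardOn.fillingOf_sequenceOf_tableauOf {f : ℕ × ℕ → ℕ} (hm : mu.colLen 0 ≤ m)
    (hmu : mu.card = k) (hf : IsStandardOn (addColCells mu m) f) {p : ℕ × ℕ}
    (hp : p ∈ addColCells mu m) :
    fillingOf mu (sequenceOf mu m k f) (tableauOf mu f) p = f p := by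
  subst hmu
  rw [hf.eq_card_col_add_bodyRank hm hp]
  obtain ⟨i, rfl⟩ | ⟨y, hy, rfl⟩ := (mem_addColCells mu hm).1 hp
  · simp_rw [fillingOf_col, colSlot, hf.sequenceOf_le_iff hm i, Fin.card_filter_val_lt,
      hf.card_col_lt_col hm i, min_eq_right (bodyRank_le_card _)]
  · rw [fillingOf_shift hy, bodySlot_of_lt (tableauOf_lt_card _), sequenceOf,
      Nat.add_sub_cancel_left, add_comm]
    refine congrArg (· + _) (congrArg card (filter_congr fun i _ => ?_))
    have hne : f (i, 0) ≠ f (y.1, y.2 + 1) := fun he => by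
      simpa using hf.injOn (col_mem_addColCells mu hm i) (shift_mem_addColCells mu hm hy) he
    exact (card_filter_lt_le_card_filter_lt_iff
      (g := fun y : ℕ × ℕ => f (y.1, y.2 + 1)) hy).trans hne.le_iff_lt

end Reconstruction

section Equiv

variable {mu : YoungDiagram} {m k : ℕ} {f f' : ℕ × ℕ → ℕ}

lemma bodyRank_congr (hm : mu.colLen 0 ≤ m) (h : Set.EqOn f f' (addColCells mu m)) :
    bodyRank mu f = bodyRank mu f' :=
  funext fun _ => congrArg card <| filter_congr fun _ hy => by
    rw [h (shift_mem_addColCells mu hm hy)]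

lemma tableauOf_congr (hm : mu.colLen 0 ≤ m) (h : Set.EqOn f f' (addColCells mu m)) :
    tableauOf mu f = tableauOf mu f' :=
  funext fun x => by
    rw [tableauOf, tableauOf, bodyRank_congr hm h, h (shift_mem_addColCells mu hm x.2)]

lemma sequenceOf_congr (hm : mu.colLen 0 ≤ m) (h : Set.EqOn f f' (addColCells mu m)) :
    sequenceOf mu m k f = sequenceOf mu m k f' :=
  funext fun _ => congrArg (1 + ·) <| congrArg card <| filter_congr fun i _ => by
    rw [bodyRank_congr hm h, h (col_mem_addColCells mu hm i)]

noncomputable def addColumnEquiv (hm : mu.colLen 0 ≤ m) (hmu : mu.card = k) :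
    {U : addColCells mu m → ℕ // IsStandardOn (addColCells mu m) (extendZero U)} ≃
      {ST : (Fin k → ℕ) × (mu.cells → ℕ) // IsAdmissiblePair mu k (m + 1) ST.1 ST.2} where
  toFun U := ⟨(sequenceOf mu m k (extendZero U.1), tableauOf mu (extendZero U.1)),
    U.2.isAdmissiblePair hm hmu⟩
  invFun ST := ⟨fun x => fillingOf mu ST.1.1 ST.1.2 x,
    (ST.2.isStandardOn_fillingOf hm hmu).congr (extendZero_restrict_eqOn _).symm⟩
  left_inv U := Subtype.ext <| funext fun x =>
    (U.2.fillingOf_sequenceOf_tableauOf hm hmu x.2).trans (extendZero_coe _ x)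
  right_inv := by
    rintro ⟨⟨S, T⟩, hS, hSmem, hT, hTlt, -⟩
    have hfill := extendZero_restrict_eqOn (s := addColCells mu m) (fillingOf mu S T)
    ext1
    simp only [sequenceOf_congr hm hfill, tableauOf_congr hm hfill,
      sequenceOf_fillingOf hmu hS hSmem hT hTlt, tableauOf_fillingOf hmu hS hT hTlt]

end Equiv

theorem syt_addColumn_eq_pairs_general (n k : ℕ) (mu : YoungDiagram)
    (hmu : mu.card = k) (hlen : mu.colLen 0 < n) :
    sytCountCells (addColCells mu (n - 1)) =
      Nat.card {ST : (Fin k → ℕ) × (mu.cells → ℕ) //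
        Monotone ST.1 ∧ (∀ i, 1 ≤ ST.1 i ∧ ST.1 i ≤ n) ∧
        Function.Injective ST.2 ∧ (∀ x, ST.2 x < k) ∧
        (∀ a b : mu.cells, a.1.1 = b.1.1 → a.1.2 < b.1.2 → ST.2 a < ST.2 b) ∧
        (∀ a b : mu.cells, a.1.2 = b.1.2 → a.1.1 < b.1.1 → ST.2 a < ST.2 b) ∧
        (∀ (x : mu.cells) (h : ST.2 x < k), x.1.1 + 1 < ST.1 ⟨ST.2 x, h⟩)} := by
  obtain ⟨m, rfl⟩ : ∃ m, n = m + 1 := ⟨n - 1, by omega⟩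
  have hm : mu.colLen 0 ≤ m := Nat.lt_succ_iff.1 hlen
  rw [Nat.add_sub_cancel, sytCountCells,
    ← Nat.card_congr (Equiv.subtypeEquivRight fun _ => isStandardOn_extendZero_iff)]
  exact Nat.card_congr (addColumnEquiv hm hmu)

/-- for a partition `μ` of `k` with fewer than `n` parts, the number of
standard Young tableaux of shape `μ + (1^{n-1})` equals the number of pairs `(S, T)` where
`S` is a weakly increasing sequence of length `k` with entries in `{1,…,n}` (a semistandard
tableau of shape `(k)`) and `T` is a standard Young tableau of shape `μ` (with values
`0,…,k-1` here), such that whenever value `v` of `T` lies in (0-indexed) row `r`, the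
`(v+1)`-st smallest entry of `S`, namely `S v`, is strictly greater than the 1-indexed row
`r + 1`. -/
theorem syt_addColumn_eq_pairs (n k : ℕ) (hn : 1 ≤ n) (mu : YoungDiagram)
    (hmu : mu.card = k) (hlen : mu.colLen 0 < n) :
    sytCountCells (addColCells mu (n - 1)) =
      Nat.card {ST : (Fin k → ℕ) × (mu.cells → ℕ) //
        Monotone ST.1 ∧ (∀ i, 1 ≤ ST.1 i ∧ ST.1 i ≤ n) ∧
        Function.Injective ST.2 ∧ (∀ x, ST.2 x < k) ∧
        (∀ a b : mu.cells, a.1.1 = b.1.1 → a.1.2 < b.1.2 → ST.2 a < ST.2 b) ∧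
        (∀ a b : mu.cells, a.1.2 = b.1.2 → a.1.1 < b.1.1 → ST.2 a < ST.2 b) ∧
        (∀ (x : mu.cells) (h : ST.2 x < k), x.1.1 + 1 < ST.1 ⟨ST.2 x, h⟩)} :=
  syt_addColumn_eq_pairs_general n k mu hmu hlen
end
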